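/- arXiv:0907.2266 — 6 statements merged into one kernel-verified Lean document; each statement's English description precedes it below -/
import Mathlib

section
/- Let R be a 2-torsion free σ-prime ring, U a σ-Lie ideal of R not contained in the center Z(R), and a, b ∈ R. If aUb = 0 and σ(a)Ub = 0, or if aUb = 0 and aUσ(b) = 0, then a = 0 or b = 0. -/
/-!
Write `[y, z] = y z - z y`. If `x U w = 0`, then `x [z, t] w = 0` for every `z` in Herstein's
subring `T(U) = {z | [z, R] ⊆ U}`, i.e. such `z` slide: `x z t w = x t z w`. With `z ∈ U` and
`t = w r` this gives `(x w) R U w = 0`, hence `(x w) R [U, R] R w = 0`, and σ-primeness forces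
`x w = 0` because `[U, R] ≠ 0`. Sliding once more, `x T(U) w = 0`. Now `T(U)` contains the ideal
generated by `[U, U]`, which is nonzero since a commutative σ-Lie ideal is central, so
σ-primeness gives `x = 0` or `w = 0`. Everything is run with `w` and `σ w` side by side; the case
`aUb = σ(a)Ub = 0` becomes `σ(b)Ua = σ(b)Uσ(a) = 0` after applying `σ`.
-/

section

variable {R : Type*} [Ring R]

def bracketSet (S T : Set R) : Set R :=
  {c | ∃ p ∈ S, ∃ q ∈ T, p * q - q * p = c}

namespace AddSubgroup

def IsLieIdeal (U : AddSubgroup R) : Prop :=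
  ∀ u ∈ U, ∀ r : R, u * r - r * u ∈ U

/-- Herstein's subring `T(U)`. -/
def commutatorPreimage (U : AddSubgroup R) : Subring R where
  carrier := {z | ∀ r : R, z * r - r * z ∈ U}
  mul_mem' {y z} hy hz r := by
    have e : y * z * r - r * (y * z) = (y * (z * r) - z * r * y) + (z * (r * y) - r * y * z) := by
      noncomm_ring
    exact e ▸ U.add_mem (hy _) (hz _)
  one_mem' r := by simp [U.zero_mem]
  add_mem' {y z} hy hz r := by
    have e : (y + z) * r - r * (y + z) = (y * r - r * y) + (z * r - r * z) := by noncomm_ring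
    exact e ▸ U.add_mem (hy r) (hz r)
  zero_mem' r := by simp [U.zero_mem]
  neg_mem' {z} hz r := by
    have e : -z * r - r * -z = -(z * r - r * z) := by noncomm_ring
    exact e ▸ U.neg_mem (hz r)

variable {U : AddSubgroup R}

theorem mem_commutatorPreimage_of_mem (hU : U.IsLieIdeal) {u : R} (hu : u ∈ U) :
    u ∈ U.commutatorPreimage :=
  hU u hu

theorem mul_mul_mem_commutatorPreimage_of_mem_bracketSet (hU : U.IsLieIdeal) {c : R}
    (hc : c ∈ bracketSet (U : Set R) U) (r s : R) : r * c * s ∈ U.commutatorPreimage := by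
  obtain ⟨p, hp, q, hq, rfl⟩ := hc
  have hT : ∀ {u}, u ∈ U → u ∈ U.commutatorPreimage := mem_commutatorPreimage_of_mem hU
  have hleft : ∀ r, r * (p * q - q * p) ∈ U.commutatorPreimage := fun r => by
    have e : r * (p * q - q * p) = (p * (r * q) - r * q * p) - (p * r - r * p) * q := by
      noncomm_ring
    exact e ▸ sub_mem (hT (hU p hp _)) (mul_mem (hT (hU p hp r)) (hT hq))
  have e : r * (p * q - q * p) * s
      = (r * (p * q - q * p) * s - s * (r * (p * q - q * p))) + s * r * (p * q - q * p) := by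
    noncomm_ring
  exact e ▸ add_mem (hT (hleft r s)) (hleft (s * r))

theorem mul_mul_mul_mul_eq_of_mem_commutatorPreimage {x w z : R} (h : ∀ u ∈ U, x * u * w = 0)
    (hz : z ∈ U.commutatorPreimage) (v s : R) : x * z * v * s * w = x * v * s * z * w := by
  linear_combination (norm := noncomm_ring) h _ (hz (v * s))

theorem mul_mul_mul_mul_eq_zero_of_mem_bracketSet (hU : U.IsLieIdeal) {x y : R}
    (h : ∀ u ∈ U, ∀ r : R, x * r * u * y = 0) {c : R} (hc : c ∈ bracketSet (U : Set R) Set.univ)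
    (r s : R) : x * r * c * s * y = 0 := by
  obtain ⟨u, hu, t, -, rfl⟩ := hc
  linear_combination (norm := noncomm_ring) h _ (hU u hu (t * s)) r - h _ (hU u hu s) (r * t)

theorem commutator_mul_commutator_eq_zero (htor : ∀ x : R, x + x = 0 → x = 0)
    (hU : U.IsLieIdeal) (hcomm : ∀ u ∈ U, ∀ v ∈ U, u * v = v * u) {u : R} (hu : u ∈ U)
    (r s t : R) : (u * r - r * u) * s * (u * t - t * u) = 0 := by
  have hsq : ∀ r t : R, (u * r - r * u) * (u * t - t * u) = 0 := fun r t =>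
    htor _ (by
      linear_combination (norm := noncomm_ring) hcomm u hu _ (hU u hu (r * t))
        - r * hcomm u hu _ (hU u hu t) - hcomm u hu _ (hU u hu r) * t)
  linear_combination (norm := noncomm_ring) hsq (r * s) t - r * hsq s t

end AddSubgroup

section StarRing

variable [StarRing R] {U : AddSubgroup R}

variable (R) in
/-- σ-primeness, with the involution `σ` written `star`. -/
def IsStarPrime : Prop :=
  ∀ a b : R, (∀ r : R, a * r * b = 0) → (∀ r : R, a * r * star b = 0) → a = 0 ∨ b = 0

open AddSubgroup

theorem star_mem_bracketSet_univ (hstar : ∀ u ∈ U, star u ∈ U) {c : R}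
    (hc : c ∈ bracketSet (U : Set R) Set.univ) : star c ∈ bracketSet (U : Set R) Set.univ := by
  obtain ⟨u, hu, t, -, rfl⟩ := hc
  exact ⟨star u, hstar u hu, -star t, trivial, by simp only [star_sub, star_mul]; noncomm_ring⟩

theorem star_mem_bracketSet_self (hstar : ∀ u ∈ U, star u ∈ U) {c : R}
    (hc : c ∈ bracketSet (U : Set R) U) : star c ∈ bracketSet (U : Set R) U := by
  obtain ⟨p, hp, q, hq, rfl⟩ := hc
  exact ⟨star q, hstar q hq, star p, hstar p hp, by simp only [star_sub, star_mul]⟩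

theorem IsStarPrime.eq_zero_or_eq_zero_of_forall_mem (hR : IsStarPrime R) {C : Set R}
    (hC : ∀ c ∈ C, star c ∈ C) {c₀ : R} (hc₀ : c₀ ∈ C) (hc₀_ne : c₀ ≠ 0) {x y : R}
    (h : ∀ c ∈ C, ∀ r s : R, x * r * c * s * y = 0)
    (h' : ∀ c ∈ C, ∀ r s : R, x * r * c * s * star y = 0) : x = 0 ∨ y = 0 := by
  refine or_iff_not_imp_right.2 fun hy => ?_
  have hxC : ∀ c ∈ C, ∀ r : R, x * r * c = 0 := fun c hc r =>
    (hR _ y (h c hc r) (h' c hc r)).resolve_right hy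
  exact (hR x c₀ (hxC c₀ hc₀) (hxC _ (hC c₀ hc₀))).resolve_right hc₀_ne

theorem forall_mul_comm_of_forall_mem_mul_comm (htor : ∀ x : R, x + x = 0 → x = 0)
    (hR : IsStarPrime R) (hU : U.IsLieIdeal) (hstar : ∀ u ∈ U, star u ∈ U)
    (hcomm : ∀ u ∈ U, ∀ v ∈ U, u * v = v * u) : ∀ u ∈ U, ∀ r : R, u * r = r * u := by
  have hsign : ∀ u ∈ U, (star u = u ∨ star u = -u) → ∀ r : R, u * r - r * u = 0 := by
    intro u hu hu' r
    have hprod := commutator_mul_commutator_eq_zero htor hU hcomm hu r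
    refine (hR _ _ (fun s => hprod s r) fun s => ?_).elim id id
    rw [star_sub, star_mul, star_mul]
    rcases hu' with hu' | hu' <;> rw [hu']
    · linear_combination (norm := noncomm_ring) -hprod s (star r)
    · linear_combination (norm := noncomm_ring) hprod s (star r)
  intro u hu r
  have hsa := hsign _ (add_mem hu (hstar u hu)) (.inl (by rw [star_add, star_star, add_comm])) r
  have hska := hsign _ (sub_mem hu (hstar u hu)) (.inr (by rw [star_sub, star_star, neg_sub])) r
  exact sub_eq_zero.1 (htor _ (by linear_combination (norm := noncomm_ring) hsa + hska))

theorem mul_eq_zero_or_eq_zero_of_forall_mem_mul_mul_eq_zero (hR : IsStarPrime R)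
    (hU : U.IsLieIdeal) (hstar : ∀ u ∈ U, star u ∈ U) (hUnc : ¬ ∀ u ∈ U, ∀ r : R, u * r = r * u)
    {x w v : R} (h : ∀ u ∈ U, x * u * w = 0) (h' : ∀ u ∈ U, x * u * star w = 0)
    (hv : ∀ u ∈ U, x * u * v = 0) : x * v = 0 ∨ w = 0 := by
  obtain ⟨u₀, hu₀, r₀, h₀⟩ : ∃ u ∈ U, ∃ r : R, u * r ≠ r * u := by simpa using hUnc
  have hvR : ∀ y, (∀ u ∈ U, x * u * y = 0) → ∀ u ∈ U, ∀ r : R, x * v * r * u * y = 0 :=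
    fun y hy u hu r => by
      rw [← mul_mul_mul_mul_eq_of_mem_commutatorPreimage hy (mem_commutatorPreimage_of_mem hU hu),
        hv u hu, zero_mul, zero_mul]
  exact hR.eq_zero_or_eq_zero_of_forall_mem (fun _ => star_mem_bracketSet_univ hstar)
    ⟨u₀, hu₀, r₀, trivial, rfl⟩ (sub_ne_zero.2 h₀)
    (fun _ => mul_mul_mul_mul_eq_zero_of_mem_bracketSet hU (hvR w h))
    (fun _ => mul_mul_mul_mul_eq_zero_of_mem_bracketSet hU (hvR _ h'))

theorem mul_mul_eq_zero_or_eq_zero_of_mem_commutatorPreimage (hR : IsStarPrime R) {x w v z : R}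
    (h : ∀ u ∈ U, x * u * w = 0) (h' : ∀ u ∈ U, x * u * star w = 0) (hv : x * v = 0)
    (hz : z ∈ U.commutatorPreimage) : x * z * v = 0 ∨ w = 0 :=
  hR _ w
    (fun s => by rw [mul_mul_mul_mul_eq_of_mem_commutatorPreimage h hz, hv, zero_mul, zero_mul,
      zero_mul])
    (fun s => by rw [mul_mul_mul_mul_eq_of_mem_commutatorPreimage h' hz, hv, zero_mul, zero_mul,
      zero_mul])

theorem eq_zero_or_eq_zero_of_forall_mem_mul_mul_eq_zero (htor : ∀ x : R, x + x = 0 → x = 0)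
    (hR : IsStarPrime R) (hU : U.IsLieIdeal) (hstar : ∀ u ∈ U, star u ∈ U)
    (hUnc : ¬ ∀ u ∈ U, ∀ r : R, u * r = r * u) {x w : R}
    (h : ∀ u ∈ U, x * u * w = 0) (h' : ∀ u ∈ U, x * u * star w = 0) : x = 0 ∨ w = 0 := by
  refine or_iff_not_imp_right.2 fun hw => ?_
  have hxv : ∀ v, (∀ u ∈ U, x * u * v = 0) → x * v = 0 := fun v hv =>
    (mul_eq_zero_or_eq_zero_of_forall_mem_mul_mul_eq_zero hR hU hstar hUnc h h' hv).resolve_right hw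
  have hxT : ∀ v, (∀ u ∈ U, x * u * v = 0) → ∀ z ∈ U.commutatorPreimage, x * z * v = 0 :=
    fun v hv z hz =>
      (mul_mul_eq_zero_or_eq_zero_of_mem_commutatorPreimage hR h h' (hxv v hv) hz).resolve_right hw
  have hIdeal : ∀ y, (∀ u ∈ U, x * u * y = 0) →
      ∀ c ∈ bracketSet (U : Set R) U, ∀ r s : R, x * r * c * s * y = 0 := fun y hy c hc r s => by
    simpa only [mul_assoc] using
      hxT y hy _ (mul_mul_mem_commutatorPreimage_of_mem_bracketSet hU hc r s)
  obtain ⟨p₀, hp₀, q₀, hq₀, hpq₀⟩ : ∃ p ∈ U, ∃ q ∈ U, p * q ≠ q * p := by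
    by_contra! hcomm
    exact hUnc (forall_mul_comm_of_forall_mem_mul_comm htor hR hU hstar hcomm)
  exact (hR.eq_zero_or_eq_zero_of_forall_mem (fun _ => star_mem_bracketSet_self hstar)
    ⟨p₀, hp₀, q₀, hq₀, rfl⟩ (sub_ne_zero.2 hpq₀) (hIdeal w h) (hIdeal _ h')).resolve_right hw

theorem eq_zero_or_eq_zero_of_forall_mem_star_mul_mul_eq_zero
    (htor : ∀ x : R, x + x = 0 → x = 0) (hR : IsStarPrime R) (hU : U.IsLieIdeal)
    (hstar : ∀ u ∈ U, star u ∈ U) (hUnc : ¬ ∀ u ∈ U, ∀ r : R, u * r = r * u) {a b : R}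
    (h : ∀ u ∈ U, a * u * b = 0) (h' : ∀ u ∈ U, star a * u * b = 0) : a = 0 ∨ b = 0 := by
  have hstar_mul : ∀ u ∈ U, ∀ y : R, star y * star u * b = 0 → star b * u * y = 0 :=
    fun u hu y hy => by simpa [mul_assoc] using congrArg star hy
  refine (eq_zero_or_eq_zero_of_forall_mem_mul_mul_eq_zero htor hR hU hstar hUnc
    (x := star b) (w := a) ?_ ?_).symm.imp_right star_eq_zero.1
  · intro u hu
    exact hstar_mul u hu a (by simpa using h' _ (hstar u hu))
  · intro u hu
    exact hstar_mul u hu (star a) (by simpa using h _ (hstar u hu))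

end StarRing

end

theorem stmt3 (R : Type*) [Ring R]
  (σ : R → R)
  (hσadd : ∀ x y : R, σ (x + y) = σ x + σ y)
  (hσmul : ∀ x y : R, σ (x * y) = σ y * σ x)
  (hσinv : ∀ x : R, σ (σ x) = x)
  (htor : ∀ x : R, x + x = 0 → x = 0)
  (hsp : ∀ a b : R, (∀ r : R, a * r * b = 0) → (∀ r : R, a * r * σ b = 0) → a = 0 ∨ b = 0)
  (U : AddSubgroup R)
  (hLie : ∀ u ∈ U, ∀ r : R, u * r - r * u ∈ U)
  (hσU : ∀ u ∈ U, σ u ∈ U)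
  (hUnc : ¬ (∀ u ∈ U, ∀ r : R, u * r = r * u))
  (a b : R)
  (h : ((∀ u ∈ U, a * u * b = 0) ∧ (∀ u ∈ U, σ a * u * b = 0)) ∨
       ((∀ u ∈ U, a * u * b = 0) ∧ (∀ u ∈ U, a * u * σ b = 0))) :
    a = 0 ∨ b = 0 := by
  let _ : StarRing R :=
    { star := σ, star_involutive := hσinv, star_mul := hσmul, star_add := hσadd }
  rcases h with ⟨h, h'⟩ | ⟨h, h'⟩
  · exact eq_zero_or_eq_zero_of_forall_mem_star_mul_mul_eq_zero htor hsp hLie hσU hUnc h h'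
  · exact eq_zero_or_eq_zero_of_forall_mem_mul_mul_eq_zero htor hsp hLie hσU hUnc h h'
end

section
/- Let R be a 2-torsion free σ-prime ring and U a nonzero σ-Lie ideal of R. If [U,U] = 0, then U ⊆ Z(R). -/
/-!
For `w` in `U`, the bracket `⁅w, x⁆` lies in `U` and so commutes with `w`. Expanding
`⁅w, ⁅w, r * s⁆⁆ = 0` and cancelling the factor 2 gives `⁅w, r⁆ * ⁅w, s⁆ = 0`, and hence
`⁅w, r⁆ * t * ⁅w, s⁆ = 0` for all `r`, `s`, `t`. If moreover `σ w = ± w`, then `σ ⁅w, r⁆ = ∓ ⁅w, σ r⁆`,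
so `a := σ ⁅w, r⁆` satisfies `a R a = 0` and `a R σ a = 0`; σ-primeness forces `a = 0`.
Every `u ∈ U` is, up to the factor 2, the sum of the symmetric and skew elements `u ± σ u` of `U`.
-/

section TwoTorsionFree

variable {R : Type*} [Ring R]

theorem lie_mul_lie_eq_zero_of_forall_lie_lie_eq_zero (htor : ∀ x : R, x + x = 0 → x = 0)
    {w : R} (hw : ∀ x : R, ⁅w, ⁅w, x⁆⁆ = 0) (r s : R) : ⁅w, r⁆ * ⁅w, s⁆ = 0 := by
  apply htor
  calc ⁅w, r⁆ * ⁅w, s⁆ + ⁅w, r⁆ * ⁅w, s⁆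
      = ⁅w, ⁅w, r * s⁆⁆ - ⁅w, ⁅w, r⁆⁆ * s - r * ⁅w, ⁅w, s⁆⁆ := by
        simp only [Ring.lie_def]; noncomm_ring
    _ = 0 := by simp [hw]

theorem lie_mul_mul_lie_eq_zero_of_forall_lie_lie_eq_zero (htor : ∀ x : R, x + x = 0 → x = 0)
    {w : R} (hw : ∀ x : R, ⁅w, ⁅w, x⁆⁆ = 0) (r t s : R) : ⁅w, r⁆ * t * ⁅w, s⁆ = 0 := by
  calc ⁅w, r⁆ * t * ⁅w, s⁆ = ⁅w, r⁆ * ⁅w, t * s⁆ - ⁅w, r⁆ * ⁅w, t⁆ * s := by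
        simp only [Ring.lie_def]; noncomm_ring
    _ = 0 := by simp [lie_mul_lie_eq_zero_of_forall_lie_lie_eq_zero htor hw]

end TwoTorsionFree

section Involution

variable {R : Type*} [Ring R] {σ : R → R}

theorem map_zero_of_map_add (hσadd : ∀ x y : R, σ (x + y) = σ x + σ y) : σ 0 = 0 :=
  map_zero (AddMonoidHom.mk' σ hσadd)

theorem map_sub_of_map_add (hσadd : ∀ x y : R, σ (x + y) = σ x + σ y) (x y : R) :
    σ (x - y) = σ x - σ y :=
  map_sub (AddMonoidHom.mk' σ hσadd) x y

theorem map_lie_of_map_mul_rev (hσadd : ∀ x y : R, σ (x + y) = σ x + σ y)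
    (hσmul : ∀ x y : R, σ (x * y) = σ y * σ x) (x y : R) : σ ⁅x, y⁆ = ⁅σ y, σ x⁆ := by
  rw [Ring.lie_def, Ring.lie_def, ← hσmul, ← hσmul, map_sub_of_map_add hσadd]

theorem lie_eq_zero_of_map_eq_or_eq_neg (hσadd : ∀ x y : R, σ (x + y) = σ x + σ y)
    (hσmul : ∀ x y : R, σ (x * y) = σ y * σ x) (hσinv : ∀ x : R, σ (σ x) = x)
    (htor : ∀ x : R, x + x = 0 → x = 0)
    (hsp : ∀ a b : R, (∀ r : R, a * r * b = 0) → (∀ r : R, a * r * σ b = 0) → a = 0 ∨ b = 0)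
    {w : R} (hw : ∀ x : R, ⁅w, ⁅w, x⁆⁆ = 0) (hσw : σ w = w ∨ σ w = -w) (r : R) :
    ⁅w, r⁆ = 0 := by
  have hsandwich := lie_mul_mul_lie_eq_zero_of_forall_lie_lie_eq_zero htor hw
  have hform : σ ⁅w, r⁆ = -⁅w, σ r⁆ ∨ σ ⁅w, r⁆ = ⁅w, σ r⁆ := by
    rw [map_lie_of_map_mul_rev hσadd hσmul]
    rcases hσw with h | h <;> [left; right] <;> simp only [h, Ring.lie_def] <;> noncomm_ring
  have hzero : σ ⁅w, r⁆ = 0 := by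
    refine (hsp _ _ (fun t => ?_) (fun t => ?_)).elim id id
    · rcases hform with h | h <;> simp [h, hsandwich]
    · rw [hσinv]
      rcases hform with h | h <;> simp [h, hsandwich]
  simpa [hσinv, map_zero_of_map_add hσadd] using congrArg σ hzero

end Involution

theorem stmt4_general (R : Type*) [Ring R]
  (σ : R → R)
  (hσadd : ∀ x y : R, σ (x + y) = σ x + σ y)
  (hσmul : ∀ x y : R, σ (x * y) = σ y * σ x)
  (hσinv : ∀ x : R, σ (σ x) = x)
  (htor : ∀ x : R, x + x = 0 → x = 0)
  (hsp : ∀ a b : R, (∀ r : R, a * r * b = 0) → (∀ r : R, a * r * σ b = 0) → a = 0 ∨ b = 0)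
  (U : AddSubgroup R)
  (hLie : ∀ u ∈ U, ∀ r : R, u * r - r * u ∈ U)
  (hσU : ∀ u ∈ U, σ u ∈ U)
  (hcomm : ∀ u ∈ U, ∀ v ∈ U, u * v - v * u = 0) :
    (∀ u ∈ U, ∀ r : R, u * r = r * u) := by
  have hU : ∀ w ∈ U, ∀ x : R, ⁅w, ⁅w, x⁆⁆ = 0 := fun w hw x => hcomm w hw _ (hLie w hw x)
  have central : ∀ w ∈ U, (σ w = w ∨ σ w = -w) → ∀ r : R, ⁅w, r⁆ = 0 := fun w hw =>
    lie_eq_zero_of_map_eq_or_eq_neg hσadd hσmul hσinv htor hsp (hU w hw)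
  intro u hu r
  have hplus : ⁅u + σ u, r⁆ = 0 :=
    central _ (U.add_mem hu (hσU u hu)) (Or.inl (by rw [hσadd, hσinv, add_comm])) r
  have hminus : ⁅u - σ u, r⁆ = 0 :=
    central _ (U.sub_mem hu (hσU u hu))
      (Or.inr (by rw [map_sub_of_map_add hσadd, hσinv, neg_sub])) r
  have htwice : ⁅u, r⁆ + ⁅u, r⁆ = 0 := by
    calc ⁅u, r⁆ + ⁅u, r⁆ = ⁅u + σ u, r⁆ + ⁅u - σ u, r⁆ := by
          simp only [Ring.lie_def]; noncomm_ring
      _ = 0 := by rw [hplus, hminus, add_zero]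
  exact sub_eq_zero.mp (htor _ htwice)

theorem stmt4 (R : Type*) [Ring R]
  (σ : R → R)
  (hσadd : ∀ x y : R, σ (x + y) = σ x + σ y)
  (hσmul : ∀ x y : R, σ (x * y) = σ y * σ x)
  (hσinv : ∀ x : R, σ (σ x) = x)
  (htor : ∀ x : R, x + x = 0 → x = 0)
  (hsp : ∀ a b : R, (∀ r : R, a * r * b = 0) → (∀ r : R, a * r * σ b = 0) → a = 0 ∨ b = 0)
  (U : AddSubgroup R)
  (hLie : ∀ u ∈ U, ∀ r : R, u * r - r * u ∈ U)
  (hσU : ∀ u ∈ U, σ u ∈ U)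
  (hUnz : ∃ u ∈ U, u ≠ (0 : R))
  (hcomm : ∀ u ∈ U, ∀ v ∈ U, u * v - v * u = 0) :
    (∀ u ∈ U, ∀ r : R, u * r = r * u) :=
  stmt4_general R σ hσadd hσmul hσinv htor hsp U hLie hσU hcomm
end

section
/- Let R be a 2-torsion free σ-prime ring and U a nonzero σ-Lie ideal of R. If d is a derivation of R anti-commuting with σ (d∘σ = −σ∘d) such that d(U) = 0, then d = 0 or U ⊆ Z(R). -/
/-!
Since `d` kills the Lie ideal `U`, every `u ∈ U` commutes with `d(R)`; expanding `d` on products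
then gives `⁅u, v⁆ * s * d t = 0` for `u v ∈ U`. As `d` anti-commutes with `σ`, the same holds
with `σ (d t)` in place of `d t`, so σ-primeness and `d ≠ 0` force `U` to be commutative.
For commutative `U` and `w ∈ U` we have `⁅w, ⁅w, x⁆⁆ = 0`, whence `⁅w, x⁆ * s * ⁅w, y⁆ = 0`;
if moreover `σ w = ±w` this also holds with `y = σ x` and σ-primeness gives `⁅w, x⁆ = 0`.
Finally `2u = (u + σ u) + (u - σ u)` and `R` is 2-torsion free.
-/

namespace SigmaPrimeRing

variable {R : Type*} [Ring R]

theorem lie_mul (u a b : R) : ⁅u, a * b⁆ = ⁅u, a⁆ * b + a * ⁅u, b⁆ := by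
  simp only [Ring.lie_def]; noncomm_ring

section Derivation

variable {d : R →+ R} (hdmul : ∀ x y : R, d (x * y) = d x * y + x * d y)
include hdmul

theorem map_lie (x y : R) : d ⁅x, y⁆ = ⁅d x, y⁆ + ⁅x, d y⁆ := by
  simp only [Ring.lie_def, map_sub, hdmul]; noncomm_ring

theorem mul_mul_lie_add_lie_mul_mul_eq_zero {u : R} (hu : ∀ r, ⁅u, d r⁆ = 0) (r s t : R) :
    d r * s * ⁅u, t⁆ + ⁅u, r⁆ * s * d t = 0 := by
  have two : ∀ a b : R, d a * ⁅u, b⁆ + ⁅u, a⁆ * d b = 0 := fun a b => calc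
    _ = ⁅u, d (a * b)⁆ - ⁅u, d a⁆ * b - a * ⁅u, d b⁆ := by
        rw [hdmul]; simp only [Ring.lie_def]; noncomm_ring
    _ = 0 := by rw [hu, hu, hu, zero_mul, mul_zero, sub_zero, sub_zero]
  calc d r * s * ⁅u, t⁆ + ⁅u, r⁆ * s * d t
      = (d r * ⁅u, s * t⁆ + ⁅u, r⁆ * d (s * t)) - (d r * ⁅u, s⁆ + ⁅u, r⁆ * d s) * t := by
        rw [hdmul, lie_mul]; noncomm_ring
    _ = 0 := by rw [two, two, zero_mul, sub_zero]

theorem lie_mul_mul_map_eq_zero {U : AddSubgroup R} (hLie : ∀ u ∈ U, ∀ r : R, ⁅u, r⁆ ∈ U)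
    (hdU : ∀ u ∈ U, d u = 0) {u v : R} (hu : u ∈ U) (hv : v ∈ U) (s t : R) :
    ⁅u, v⁆ * s * d t = 0 := by
  have hud : ∀ r, ⁅u, d r⁆ = 0 := fun r => by
    simpa [hdU u hu, Ring.lie_def] using (map_lie hdmul u r).symm.trans (hdU _ (hLie u hu r))
  simpa [hdU v hv] using mul_mul_lie_add_lie_mul_mul_eq_zero hdmul hud v s t

end Derivation

theorem eq_zero_of_mul_mul_map_eq_zero {σ d : R → R}
    (hsp : ∀ a b : R, (∀ r : R, a * r * b = 0) → (∀ r : R, a * r * σ b = 0) → a = 0 ∨ b = 0)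
    (hdσ : ∀ x : R, d (σ x) = - σ (d x)) (hd : ¬ ∀ x, d x = 0) {a : R}
    (ha : ∀ s t, a * s * d t = 0) : a = 0 := by
  push Not at hd
  obtain ⟨t, ht⟩ := hd
  have haσ : ∀ s, a * s * σ (d t) = 0 := fun s => by
    simpa [hdσ] using ha s (σ t)
  exact (hsp a (d t) (fun s => ha s t) haσ).resolve_right ht

theorem lie_mul_mul_lie_eq_zero (htor : ∀ x : R, x + x = 0 → x = 0) {w : R}
    (hw : ∀ x : R, ⁅w, ⁅w, x⁆⁆ = 0) (x s y : R) : ⁅w, x⁆ * s * ⁅w, y⁆ = 0 := by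
  have two : ∀ a b : R, ⁅w, a⁆ * ⁅w, b⁆ = 0 := fun a b => htor _ <| calc
    _ = ⁅w, ⁅w, a * b⁆⁆ - ⁅w, ⁅w, a⁆⁆ * b - a * ⁅w, ⁅w, b⁆⁆ := by
        simp only [Ring.lie_def]; noncomm_ring
    _ = 0 := by rw [hw, hw, hw, zero_mul, mul_zero, sub_zero, sub_zero]
  calc ⁅w, x⁆ * s * ⁅w, y⁆ = ⁅w, x * s⁆ * ⁅w, y⁆ - x * (⁅w, s⁆ * ⁅w, y⁆) := by
        rw [lie_mul]; noncomm_ring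
    _ = 0 := by rw [two, two, mul_zero, sub_zero]

theorem lie_eq_zero_of_map_eq_or_eq_neg {σ : R →+ R}
    (hσmul : ∀ x y : R, σ (x * y) = σ y * σ x)
    (hsp : ∀ a b : R, (∀ r : R, a * r * b = 0) → (∀ r : R, a * r * σ b = 0) → a = 0 ∨ b = 0)
    (htor : ∀ x : R, x + x = 0 → x = 0) {w : R} (hw : ∀ x : R, ⁅w, ⁅w, x⁆⁆ = 0)
    (hσw : σ w = w ∨ σ w = -w) (x : R) : ⁅w, x⁆ = 0 := by
  have hσlie : σ ⁅w, x⁆ = -⁅w, σ x⁆ ∨ σ ⁅w, x⁆ = ⁅w, σ x⁆ := by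
    rw [Ring.lie_def, map_sub, hσmul, hσmul, Ring.lie_def]
    rcases hσw with h | h <;> rw [h]
    · exact Or.inl (neg_sub _ _).symm
    · exact Or.inr (by noncomm_ring)
  have hσ : ∀ s, ⁅w, x⁆ * s * σ ⁅w, x⁆ = 0 := fun s => by
    rcases hσlie with h | h <;>
      simp only [h, mul_neg, lie_mul_mul_lie_eq_zero htor hw x s (σ x), neg_zero]
  exact (hsp _ _ (fun s => lie_mul_mul_lie_eq_zero htor hw x s x) hσ).elim id id

theorem lie_eq_zero_of_forall_lie_eq_zero {σ : R →+ R}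
    (hσmul : ∀ x y : R, σ (x * y) = σ y * σ x) (hσinv : ∀ x : R, σ (σ x) = x)
    (hsp : ∀ a b : R, (∀ r : R, a * r * b = 0) → (∀ r : R, a * r * σ b = 0) → a = 0 ∨ b = 0)
    (htor : ∀ x : R, x + x = 0 → x = 0) {U : AddSubgroup R}
    (hLie : ∀ u ∈ U, ∀ r : R, ⁅u, r⁆ ∈ U) (hσU : ∀ u ∈ U, σ u ∈ U)
    (hcomm : ∀ u ∈ U, ∀ v ∈ U, ⁅u, v⁆ = 0) {u : R} (hu : u ∈ U) (r : R) : ⁅u, r⁆ = 0 := by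
  have central : ∀ w ∈ U, (σ w = w ∨ σ w = -w) → ⁅w, r⁆ = 0 := fun w hw hσw =>
    lie_eq_zero_of_map_eq_or_eq_neg hσmul hsp htor (fun x => hcomm w hw _ (hLie w hw x)) hσw r
  have hplus := central _ (U.add_mem hu (hσU u hu)) (Or.inl (by rw [map_add, hσinv, add_comm]))
  have hminus := central _ (U.sub_mem hu (hσU u hu)) (Or.inr (by rw [map_sub, hσinv, neg_sub]))
  refine htor _ ?_
  calc ⁅u, r⁆ + ⁅u, r⁆ = ⁅u + σ u, r⁆ + ⁅u - σ u, r⁆ := by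
        simp only [Ring.lie_def]; noncomm_ring
    _ = 0 := by rw [hplus, hminus, add_zero]

end SigmaPrimeRing

open SigmaPrimeRing in
theorem stmt6_general (R : Type*) [Ring R]
  (σ : R → R)
  (hσadd : ∀ x y : R, σ (x + y) = σ x + σ y)
  (hσmul : ∀ x y : R, σ (x * y) = σ y * σ x)
  (hσinv : ∀ x : R, σ (σ x) = x)
  (htor : ∀ x : R, x + x = 0 → x = 0)
  (hsp : ∀ a b : R, (∀ r : R, a * r * b = 0) → (∀ r : R, a * r * σ b = 0) → a = 0 ∨ b = 0)
  (U : AddSubgroup R)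
  (hLie : ∀ u ∈ U, ∀ r : R, u * r - r * u ∈ U)
  (hσU : ∀ u ∈ U, σ u ∈ U)
  (d : R → R)
  (hdadd : ∀ x y : R, d (x + y) = d x + d y)
  (hdmul : ∀ x y : R, d (x * y) = d x * y + x * d y)
  (hdσ : ∀ x : R, d (σ x) = - σ (d x))
  (hdU : ∀ u ∈ U, d u = 0) :
    (∀ x : R, d x = 0) ∨ (∀ u ∈ U, ∀ r : R, u * r = r * u) := by
  by_cases hd : ∀ x, d x = 0
  · exact Or.inl hd
  let D : R →+ R := AddMonoidHom.mk' d hdadd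
  let S : R →+ R := AddMonoidHom.mk' σ hσadd
  have hUcomm : ∀ u ∈ U, ∀ v ∈ U, ⁅u, v⁆ = 0 := fun u hu v hv =>
    eq_zero_of_mul_mul_map_eq_zero hsp hdσ hd
      (lie_mul_mul_map_eq_zero (d := D) hdmul hLie hdU hu hv)
  exact Or.inr fun u hu r => sub_eq_zero.mp <|
    lie_eq_zero_of_forall_lie_eq_zero (σ := S) hσmul hσinv hsp htor hLie hσU hUcomm hu r

theorem stmt6 (R : Type*) [Ring R]
  (σ : R → R)
  (hσadd : ∀ x y : R, σ (x + y) = σ x + σ y)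
  (hσmul : ∀ x y : R, σ (x * y) = σ y * σ x)
  (hσinv : ∀ x : R, σ (σ x) = x)
  (htor : ∀ x : R, x + x = 0 → x = 0)
  (hsp : ∀ a b : R, (∀ r : R, a * r * b = 0) → (∀ r : R, a * r * σ b = 0) → a = 0 ∨ b = 0)
  (U : AddSubgroup R)
  (hLie : ∀ u ∈ U, ∀ r : R, u * r - r * u ∈ U)
  (hσU : ∀ u ∈ U, σ u ∈ U)
  (hUnz : ∃ u ∈ U, u ≠ (0 : R))
  (d : R → R)
  (hdadd : ∀ x y : R, d (x + y) = d x + d y)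
  (hdmul : ∀ x y : R, d (x * y) = d x * y + x * d y)
  (hdσ : ∀ x : R, d (σ x) = - σ (d x))
  (hdU : ∀ u ∈ U, d u = 0) :
    (∀ x : R, d x = 0) ∨ (∀ u ∈ U, ∀ r : R, u * r = r * u) :=
  stmt6_general R σ hσadd hσmul hσinv htor hsp U hLie hσU d hdadd hdmul hdσ hdU
end

section
/- Let R be a 2-torsion free σ-prime ring and U a square closed σ-Lie ideal of R. If d is a derivation of R satisfying [d(u), u] ∈ Z(R) for all u ∈ U, then U ⊆ Z(R) or d = 0. -/
set_option maxHeartbeats 1600000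

namespace Stmt8Aux

variable {R : Type*} [Ring R]

structure Pack (σ : R → R) (U : AddSubgroup R) (d : R → R) : Prop where
  hadd : ∀ x y : R, σ (x + y) = σ x + σ y
  hmul : ∀ x y : R, σ (x * y) = σ y * σ x
  hinv : ∀ x : R, σ (σ x) = x
  tor : ∀ x : R, x + x = 0 → x = 0
  sp : ∀ a b : R, (∀ r : R, a * r * b = 0) → (∀ r : R, a * r * σ b = 0) → a = 0 ∨ b = 0
  lie : ∀ u ∈ U, ∀ r : R, u * r - r * u ∈ U
  sU : ∀ u ∈ U, σ u ∈ U
  sq : ∀ u ∈ U, u * u ∈ U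
  dadd : ∀ x y : R, d (x + y) = d x + d y
  dmul : ∀ x y : R, d (x * y) = d x * y + x * d y
  cent : ∀ u ∈ U, ∀ r : R, (d u * u - u * d u) * r = r * (d u * u - u * d u)

variable {σ : R → R} {U : AddSubgroup R} {d : R → R}

lemma sig0 (P : Pack σ U d) : σ (0:R) = 0 := by
  have h := P.hadd 0 0
  rw [add_zero] at h
  have h2 : σ (0:R) + σ (0:R) = σ (0:R) + 0 := by rw [add_zero]; exact h.symm
  exact add_left_cancel h2

lemma siginj (P : Pack σ U d) {x : R} (h : σ x = 0) : x = 0 := by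
  have h2 : σ (σ x) = σ 0 := by rw [h]
  rwa [P.hinv, sig0 P] at h2

lemma signeg (P : Pack σ U d) (x : R) : σ (-x) = - σ x := by
  have h := P.hadd x (-x)
  rw [add_neg_cancel, sig0 P] at h
  exact eq_neg_of_add_eq_zero_left (by rw [add_comm]; exact h.symm)

lemma sigsub (P : Pack σ U d) (x y : R) : σ (x - y) = σ x - σ y := by
  rw [sub_eq_add_neg, P.hadd, signeg P, sub_eq_add_neg]

lemma d0 (P : Pack σ U d) : d (0:R) = 0 := by
  have h := P.dadd 0 0
  rw [add_zero] at h
  have h2 : d (0:R) + d (0:R) = d (0:R) + 0 := by rw [add_zero]; exact h.symm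
  exact add_left_cancel h2

lemma dneg (P : Pack σ U d) (x : R) : d (-x) = - d x := by
  have h := P.dadd x (-x)
  rw [add_neg_cancel, d0 P] at h
  exact eq_neg_of_add_eq_zero_left (by rw [add_comm]; exact h.symm)

lemma dsub (P : Pack σ U d) (x y : R) : d (x - y) = d x - d y := by
  rw [sub_eq_add_neg, P.dadd, dneg P, sub_eq_add_neg]

lemma semiprime (P : Pack σ U d) {a : R} (h : ∀ r : R, a * r * a = 0) : a = 0 := by
  have key : ∀ s r : R, (σ a * s * a) * r * (σ a * s * a) = 0 := by
    intro s r
    have e : (σ a * s * a) * r * (σ a * s * a) = σ a * s * (a * (r * σ a * s) * a) := by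
      noncomm_ring
    rw [e, h (r * σ a * s), mul_zero]
  have hc : ∀ s : R, σ a * s * a = 0 := by
    intro s
    have hσc : σ (σ a * s * a) = σ a * (σ s * a) := by
      rw [P.hmul, P.hmul, P.hinv]
    have h2 : ∀ r : R, (σ a * s * a) * r * σ (σ a * s * a) = 0 := by
      intro r
      rw [hσc]
      have e : (σ a * s * a) * r * (σ a * (σ s * a)) = σ a * s * (a * (r * σ a * σ s) * a) := by
        noncomm_ring
      rw [e, h (r * σ a * σ s), mul_zero]
    rcases P.sp _ _ (key s) h2 with h' | h'
    · exact h'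
    · exact h'
  have h2 : ∀ r : R, σ a * r * σ a = 0 := by
    intro r
    have e : σ (a * σ r * a) = σ a * (r * σ a) := by
      rw [P.hmul, P.hmul, P.hinv]
    have e2 : σ a * r * σ a = σ (a * σ r * a) := by rw [e]; noncomm_ring
    rw [e2, h (σ r), sig0 P]
  rcases P.sp _ _ hc h2 with h' | h'
  · exact siginj P h'
  · exact h'

lemma hsp' (P : Pack σ U d) {a b : R} (h1 : ∀ r : R, a * r * b = 0)
    (h2 : ∀ r : R, σ a * r * b = 0) : a = 0 ∨ b = 0 := by
  have k1 : ∀ r : R, σ b * r * a = 0 := by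
    intro r
    have e : σ (σ a * σ r * b) = σ b * (r * a) := by
      rw [P.hmul, P.hmul, P.hinv, P.hinv]
    have e2 : σ b * r * a = σ (σ a * σ r * b) := by rw [e]; noncomm_ring
    rw [e2, h2 (σ r), sig0 P]
  have k2 : ∀ r : R, σ b * r * σ a = 0 := by
    intro r
    have e : σ (a * σ r * b) = σ b * (r * σ a) := by
      rw [P.hmul, P.hmul, P.hinv]
    have e2 : σ b * r * σ a = σ (a * σ r * b) := by rw [e]; noncomm_ring
    rw [e2, h1 (σ r), sig0 P]
  rcases P.sp _ _ k1 k2 with h' | h'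
  · right; exact siginj P h'
  · left; exact h'

lemma U2 (P : Pack σ U d) {u v : R} (hu : u ∈ U) (hv : v ∈ U) : u * v + u * v ∈ U := by
  have h1 : (u + v) * (u + v) - u * u - v * v ∈ U :=
    U.sub_mem (U.sub_mem (P.sq _ (U.add_mem hu hv)) (P.sq _ hu)) (P.sq _ hv)
  have h2 : u * v - v * u ∈ U := P.lie u hu v
  have e : u * v + u * v = ((u + v) * (u + v) - u * u - v * v) + (u * v - v * u) := by
    noncomm_ring
  rw [e]; exact U.add_mem h1 h2

/-- C2 : [du,u] * [u,r] = 0 -/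
lemma cC2 (P : Pack σ U d) {u : R} (hu : u ∈ U) :
    ∀ r : R, (d u * u - u * d u) * (u * r - r * u) = 0 := by
  intro r
  have hc : ∀ s : R, (d u * u - u * d u) * s = s * (d u * u - u * d u) := P.cent u hu
  have hc2 := P.cent _ (P.sq u hu)
  have hc3 := P.cent _ (U.add_mem hu (P.sq u hu))
  rw [P.dadd, P.dmul] at hc3
  rw [P.dmul] at hc2
  have hM : ∀ s : R, ((d u * u - u * d u) * u + u * (d u * u - u * d u)
       + ((d u * u - u * d u) * u + u * (d u * u - u * d u))) * s
      = s * ((d u * u - u * d u) * u + u * (d u * u - u * d u)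
       + ((d u * u - u * d u) * u + u * (d u * u - u * d u))) := by
    intro s
    have e : (d u * u - u * d u) * u + u * (d u * u - u * d u)
       + ((d u * u - u * d u) * u + u * (d u * u - u * d u))
       = ((d u + (d u * u + u * d u)) * (u + u * u) - (u + u * u) * (d u + (d u * u + u * d u)))
         - (d u * u - u * d u)
         - ((d u * u + u * d u) * (u * u) - (u * u) * (d u * u + u * d u)) := by noncomm_ring
    rw [e, sub_mul, sub_mul, mul_sub, mul_sub, hc3 s, hc2 s, hc s]
  have hcu : u * (d u * u - u * d u) = (d u * u - u * d u) * u := (hc u).symm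
  simp only [hcu] at hM
  have h0 := hM r
  have e3 : ((d u * u - u * d u) * u * r - r * ((d u * u - u * d u) * u))
      + ((d u * u - u * d u) * u * r - r * ((d u * u - u * d u) * u))
      + (((d u * u - u * d u) * u * r - r * ((d u * u - u * d u) * u))
      + ((d u * u - u * d u) * u * r - r * ((d u * u - u * d u) * u))) = 0 := by
    have e2 : ((d u * u - u * d u) * u * r - r * ((d u * u - u * d u) * u))
      + ((d u * u - u * d u) * u * r - r * ((d u * u - u * d u) * u))
      + (((d u * u - u * d u) * u * r - r * ((d u * u - u * d u) * u))
      + ((d u * u - u * d u) * u * r - r * ((d u * u - u * d u) * u)))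
      = ((d u * u - u * d u) * u + (d u * u - u * d u) * u
       + ((d u * u - u * d u) * u + (d u * u - u * d u) * u)) * r
       - r * ((d u * u - u * d u) * u + (d u * u - u * d u) * u
       + ((d u * u - u * d u) * u + (d u * u - u * d u) * u)) := by noncomm_ring
    rw [e2, h0, sub_self]
  have hY : (d u * u - u * d u) * u * r - r * ((d u * u - u * d u) * u) = 0 :=
    P.tor _ (P.tor _ e3)
  have e5 : (d u * u - u * d u) * (u * r - r * u)
      = ((d u * u - u * d u) * u * r - r * ((d u * u - u * d u) * u))
        + (r * (d u * u - u * d u) - (d u * u - u * d u) * r) * u := by noncomm_ring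
  rw [e5, hY, hc r, sub_self, zero_mul, add_zero]

/-- helper: [du,u]*x*[u,s] = 0 -/
lemma cC2' (P : Pack σ U d) {t : R} (ht : t ∈ U) :
    ∀ x s : R, (d t * t - t * d t) * x * (t * s - s * t) = 0 := by
  intro x s
  have e : (d t * t - t * d t) * x * (t * s - s * t)
      = x * ((d t * t - t * d t) * (t * s - s * t))
        + ((d t * t - t * d t) * x - x * (d t * t - t * d t)) * (t * s - s * t) := by
    noncomm_ring
  rw [e, cC2 P ht s, mul_zero, P.cent t ht x, sub_self, zero_mul, add_zero]

/-- C3 : [du,u] = 0 for all u ∈ U -/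
lemma cC3 (P : Pack σ U d) {u : R} (hu : u ∈ U) : d u * u - u * d u = 0 := by
  have kill : ∀ t : R, t ∈ U → (∀ x s : R, (d t * t - t * d t) * x * σ (t * s - s * t) = 0) →
      d t * t - t * d t = 0 := by
    intro t ht hβ
    by_cases hζ : ∀ s : R, t * s - s * t = 0
    · have e : d t * t - t * d t = -(t * d t - d t * t) := by noncomm_ring
      rw [e, hζ (d t), neg_zero]
    · push_neg at hζ
      obtain ⟨s₀, hs₀⟩ := hζ
      rcases P.sp _ _ (fun x => cC2' P ht x s₀) (fun x => hβ x s₀) with h | h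
      · exact h
      · exact absurd h hs₀
  have symm_case : ∀ t : R, t ∈ U → (σ t = t ∨ σ t = -t) → d t * t - t * d t = 0 := by
    intro t ht hε
    apply kill t ht
    intro x s
    have hσc : σ (t * s - s * t) = σ s * σ t - σ t * σ s := by
      rw [sigsub P, P.hmul, P.hmul]
    rcases hε with h | h
    · rw [hσc, h]
      have e : (d t * t - t * d t) * x * (σ s * t - t * σ s)
          = -((d t * t - t * d t) * x * (t * σ s - σ s * t)) := by noncomm_ring
      rw [e, cC2' P ht x (σ s), neg_zero]
    · rw [hσc, h]
      have e : (d t * t - t * d t) * x * (σ s * -t - -t * σ s)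
          = (d t * t - t * d t) * x * (t * σ s - σ s * t) := by noncomm_ring
      rw [e, cC2' P ht x (σ s)]
  have hsplit : (d u * u - u * d u) + (d (σ u) * σ u - σ u * d (σ u)) = 0 := by
    have hsu : σ u ∈ U := P.sU u hu
    have h1 : σ (u + σ u) = u + σ u ∨ σ (u + σ u) = -(u + σ u) := by
      left; rw [P.hadd, P.hinv, add_comm]
    have h2 : σ (u - σ u) = u - σ u ∨ σ (u - σ u) = -(u - σ u) := by
      right; rw [sigsub P, P.hinv, neg_sub]
    have hc1 := symm_case _ (U.add_mem hu hsu) h1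
    have hc2 := symm_case _ (U.sub_mem hu hsu) h2
    rw [P.dadd] at hc1
    rw [dsub P] at hc2
    have e : ((d u * u - u * d u) + (d (σ u) * σ u - σ u * d (σ u)))
        + ((d u * u - u * d u) + (d (σ u) * σ u - σ u * d (σ u)))
        = ((d u + d (σ u)) * (u + σ u) - (u + σ u) * (d u + d (σ u)))
          + ((d u - d (σ u)) * (u - σ u) - (u - σ u) * (d u - d (σ u))) := by noncomm_ring
    exact P.tor _ (by rw [e, hc1, hc2, add_zero])
  apply kill u hu
  intro x s
  have hσc : σ (u * s - s * u) = σ s * σ u - σ u * σ s := by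
    rw [sigsub P, P.hmul, P.hmul]
  rw [hσc]
  have e : (d u * u - u * d u) * x * (σ s * σ u - σ u * σ s)
      = (d (σ u) * σ u - σ u * d (σ u)) * x * (σ u * σ s - σ s * σ u)
        + ((d u * u - u * d u) + (d (σ u) * σ u - σ u * d (σ u))) * (x * (σ s * σ u - σ u * σ s)) := by
    noncomm_ring
  rw [e, cC2' P (P.sU u hu) x (σ s), hsplit, zero_mul, add_zero]

/-- C4 : B ≡ 0 : [du,v] + [dv,u] = 0 -/
lemma cB (P : Pack σ U d) {u v : R} (hu : u ∈ U) (hv : v ∈ U) :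
    (d u * v - v * d u) + (d v * u - u * d v) = 0 := by
  have h1 := cC3 P (U.add_mem hu hv)
  have h2 := cC3 P hu
  have h3 := cC3 P hv
  rw [P.dadd] at h1
  have e : ((d u * v - v * d u) + (d v * u - u * d v))
      = ((d u + d v) * (u + v) - (u + v) * (d u + d v))
        - (d u * u - u * d u) - (d v * v - v * d v) := by noncomm_ring
  rw [e, h1, h2, h3]; simp

/-- I : dv * [a,v] = 0 -/
lemma cI (P : Pack σ U d) {v a : R} (hv : v ∈ U) (ha : a ∈ U) :
    d v * (a * v - v * a) = 0 := by
  have h2va : v * a + v * a ∈ U := U2 P hv ha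
  have hB := cB P hv h2va
  have hBa := cB P hv ha
  have hcv := cC3 P hv
  rw [show d (v * a + v * a) = (d v * a + v * d a) + (d v * a + v * d a) by
    rw [P.dadd, P.dmul]] at hB
  have e : d v * (a * v - v * a) + d v * (a * v - v * a)
      = ((d v * (v * a + v * a) - (v * a + v * a) * d v)
          + (((d v * a + v * d a) + (d v * a + v * d a)) * v
             - v * ((d v * a + v * d a) + (d v * a + v * d a))))
        - (v * ((d v * a - a * d v) + (d a * v - v * d a))
           + v * ((d v * a - a * d v) + (d a * v - v * d a)))
        - ((d v * v - v * d v) * a + (d v * v - v * d v) * a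
           + ((d v * v - v * d v) * a + (d v * v - v * d v) * a)) := by
    noncomm_ring
  refine P.tor _ ?_
  rw [e, hB, hBa, hcv]
  simp

/-- I' : [a,v] * dv = 0 -/
lemma cI' (P : Pack σ U d) {v a : R} (hv : v ∈ U) (ha : a ∈ U) :
    (a * v - v * a) * d v = 0 := by
  have h2av : a * v + a * v ∈ U := U2 P ha hv
  have hB := cB P hv h2av
  have hBa := cB P hv ha
  have hcv := cC3 P hv
  rw [show d (a * v + a * v) = (d a * v + a * d v) + (d a * v + a * d v) by
    rw [P.dadd, P.dmul]] at hB
  have e : (a * v - v * a) * d v + (a * v - v * a) * d v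
      = ((d v * (a * v + a * v) - (a * v + a * v) * d v)
          + (((d a * v + a * d v) + (d a * v + a * d v)) * v
             - v * ((d a * v + a * d v) + (d a * v + a * d v))))
        - (((d v * a - a * d v) + (d a * v - v * d a)) * v
           + ((d v * a - a * d v) + (d a * v - v * d a)) * v)
        - (a * (d v * v - v * d v) + a * (d v * v - v * d v)
           + (a * (d v * v - v * d v) + a * (d v * v - v * d v))) := by
    noncomm_ring
  refine P.tor _ ?_
  rw [e, hB, hBa, hcv]
  simp

/-- GOLD : da * [b,v] + [a,v] * db = 0 -/
lemma cGOLD (P : Pack σ U d) {v a b : R} (hv : v ∈ U) (ha : a ∈ U) (hb : b ∈ U) :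
    d a * (b * v - v * b) + (a * v - v * a) * d b = 0 := by
  have h2ab : a * b + a * b ∈ U := U2 P ha hb
  have hB := cB P hv h2ab
  have hBb := cB P hv hb
  have hBa := cB P hv ha
  rw [show d (a * b + a * b) = (d a * b + a * d b) + (d a * b + a * d b) by
    rw [P.dadd, P.dmul]] at hB
  have e : (d a * (b * v - v * b) + (a * v - v * a) * d b)
        + (d a * (b * v - v * b) + (a * v - v * a) * d b)
      = ((d v * (a * b + a * b) - (a * b + a * b) * d v)
          + (((d a * b + a * d b) + (d a * b + a * d b)) * v
             - v * ((d a * b + a * d b) + (d a * b + a * d b))))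
        - (a * ((d v * b - b * d v) + (d b * v - v * d b))
           + a * ((d v * b - b * d v) + (d b * v - v * d b)))
        - (((d v * a - a * d v) + (d a * v - v * d a)) * b
           + ((d v * a - a * d v) + (d a * v - v * d a)) * b) := by
    noncomm_ring
  refine P.tor _ ?_
  rw [e, hB, hBb, hBa]
  simp

/-- II : dv * a * [b,v] = 0 -/
lemma cII (P : Pack σ U d) {v a b : R} (hv : v ∈ U) (ha : a ∈ U) (hb : b ∈ U) :
    d v * a * (b * v - v * b) = 0 := by
  have h := cI P hv (U2 P ha hb)
  have hI := cI P hv ha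
  have e : d v * a * (b * v - v * b) + d v * a * (b * v - v * b)
      = d v * ((a * b + a * b) * v - v * (a * b + a * b))
        - (d v * (a * v - v * a) * b + d v * (a * v - v * a) * b) := by noncomm_ring
  refine P.tor _ ?_
  rw [e, h, hI]
  simp

/-- II' : [a,v] * b * dv = 0 -/
lemma cII' (P : Pack σ U d) {v a b : R} (hv : v ∈ U) (ha : a ∈ U) (hb : b ∈ U) :
    (a * v - v * a) * b * d v = 0 := by
  have h := cI' P hv (U2 P ha hb)
  have hI := cI' P hv hb
  have e : (a * v - v * a) * b * d v + (a * v - v * a) * b * d v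
      = ((a * b + a * b) * v - v * (a * b + a * b)) * d v
        - (a * ((b * v - v * b) * d v) + a * ((b * v - v * b) * d v)) := by noncomm_ring
  refine P.tor _ ?_
  rw [e, h, hI]
  simp

/-- I' linearized in the base -/
lemma cI'lin (P : Pack σ U d) {u u' a : R} (hu : u ∈ U) (hu' : u' ∈ U) (ha : a ∈ U) :
    (a * u - u * a) * d u' + (a * u' - u' * a) * d u = 0 := by
  have h := cI' P (U.add_mem hu hu') ha
  rw [P.dadd] at h
  have e : (a * u - u * a) * d u' + (a * u' - u' * a) * d u
      = (a * (u + u') - (u + u') * a) * (d u + d u')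
        - (a * u - u * a) * d u - (a * u' - u' * a) * d u' := by noncomm_ring
  rw [e, h, cI' P hu ha, cI' P hu' ha]
  simp

/-- N5' : [a,v] * [v, dr] = 0 -/
lemma cN5' (P : Pack σ U d) {v a : R} (hv : v ∈ U) (ha : a ∈ U) (r : R) :
    (a * v - v * a) * (v * d r - d r * v) = 0 := by
  have hvr : v * r - r * v ∈ U := P.lie v hv r
  have hlin := cI'lin P hv hvr ha
  rw [show d (v * r - r * v) = (d v * r + v * d r) - (d r * v + r * d v) by
    rw [dsub P, P.dmul, P.dmul]] at hlin
  have hm : a * r - r * a ∈ U := P.lie a ha r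
  have e : (a * v - v * a) * (v * d r - d r * v)
      = ((a * v - v * a) * ((d v * r + v * d r) - (d r * v + r * d v))
          + (a * (v * r - r * v) - (v * r - r * v) * a) * d v)
        - ((a * v - v * a) * d v) * r + r * ((a * v - v * a) * d v)
        + ((a * r - r * a) * v - v * (a * r - r * a)) * d v := by noncomm_ring
  rw [e, hlin, cI' P hv ha, cI' P hv hm]
  simp

/-- Y6' : [a,v] * Y * dv = - da * [[Y,v],v] -/
lemma cY6' (P : Pack σ U d) {v a : R} (hv : v ∈ U) (ha : a ∈ U) (Y : R) :
    (a * v - v * a) * Y * d v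
      + d a * ((Y * v - v * Y) * v - v * (Y * v - v * Y)) = 0 := by
  have hb : v * Y - Y * v ∈ U := P.lie v hv Y
  have hg := cGOLD P hv ha hb
  rw [show d (v * Y - Y * v) = (d v * Y + v * d Y) - (d Y * v + Y * d v) by
    rw [dsub P, P.dmul, P.dmul]] at hg
  have e : (a * v - v * a) * Y * d v
      + d a * ((Y * v - v * Y) * v - v * (Y * v - v * Y))
      = -(d a * ((v * Y - Y * v) * v - v * (v * Y - Y * v))
          + (a * v - v * a) * ((d v * Y + v * d Y) - (d Y * v + Y * d v)))
        + ((a * v - v * a) * d v) * Y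
        + (a * v - v * a) * (v * d Y - d Y * v) := by noncomm_ring
  rw [e, hg, cI' P hv ha, cN5' P hv ha Y]
  simp

/-- BHK : dv * r * ([a,v][b,v]) = 0 -/
lemma cBHK (P : Pack σ U d) {v a b : R} (hv : v ∈ U) (ha : a ∈ U) (hb : b ∈ U) (r : R) :
    d v * r * ((a * v - v * a) * (b * v - v * b)) = 0 := by
  have hza : a * v - v * a ∈ U := P.lie a ha v
  have h2 := cII P hv (P.lie _ hza r) hb
  have e : d v * r * ((a * v - v * a) * (b * v - v * b))
      = d v * (a * v - v * a) * (r * (b * v - v * b))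
        - d v * ((a * v - v * a) * r - r * (a * v - v * a)) * (b * v - v * b) := by
    noncomm_ring
  rw [e, h2, cI P hv ha]
  simp

/-- hsp-based degeneracy -/
lemma hspDeg (P : Pack σ U d) {v v' : R} (hv : v ∈ U)
    (hσ : σ v = v' ∨ σ v = -v') (hdv : d v ≠ 0)
    (hcross : ∀ r a b : R, a ∈ U → b ∈ U →
      d v * r * ((a * v' - v' * a) * (b * v' - v' * b)) = 0)
    {a b : R} (ha : a ∈ U) (hb : b ∈ U) :
    (a * v - v * a) * (b * v - v * b) = 0 := by
  have hσside : ∀ r : R, d v * r * σ ((a * v - v * a) * (b * v - v * b)) = 0 := by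
    intro r
    have e1 : σ ((a * v - v * a) * (b * v - v * b))
        = (σ v * σ b - σ b * σ v) * (σ v * σ a - σ a * σ v) := by
      rw [P.hmul, sigsub P, sigsub P, P.hmul, P.hmul, P.hmul, P.hmul]
    rcases hσ with h | h
    · rw [e1, h]
      have e2 : d v * r * ((v' * σ b - σ b * v') * (v' * σ a - σ a * v'))
          = d v * r * ((σ b * v' - v' * σ b) * (σ a * v' - v' * σ a)) := by noncomm_ring
      rw [e2]; exact hcross r (σ b) (σ a) (P.sU b hb) (P.sU a ha)
    · rw [e1, h]
      have e2 : d v * r * ((-v' * σ b - σ b * -v') * (-v' * σ a - σ a * -v'))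
          = d v * r * ((σ b * v' - v' * σ b) * (σ a * v' - v' * σ a)) := by noncomm_ring
      rw [e2]; exact hcross r (σ b) (σ a) (P.sU b hb) (P.sU a ha)
  rcases P.sp _ _ (fun r => cBHK P hv ha hb r) hσside with h | h
  · exact absurd h hdv
  · exact h

/-- degeneracy for symmetric elements -/
lemma cDeg (P : Pack σ U d) {v : R} (hv : v ∈ U) (hε : σ v = v ∨ σ v = -v)
    (hdv : d v ≠ 0) {a b : R} (ha : a ∈ U) (hb : b ∈ U) :
    (a * v - v * a) * (b * v - v * b) = 0 :=
  hspDeg P hv hε hdv (fun r a b ha hb => cBHK P hv ha hb r) ha hb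

/-- Mixed exchange relation -/
lemma cMX (P : Pack σ U d) {w x : R} (hw : w ∈ U) (hx : x ∈ U)
    (hεw : σ w = w ∨ σ w = -w) (hεx : σ x = x ∨ σ x = -x)
    (hdw : d w ≠ 0) (hdx : d x ≠ 0) {a b : R} (ha : a ∈ U) (hb : b ∈ U) :
    (a * w - w * a) * (b * x - x * b) + (a * x - x * a) * (b * w - w * b) = 0 := by
  by_cases h1 : d (w + x) = 0
  · have hv : w - x ∈ U := U.sub_mem hw hx
    have hd2 : d (w - x) ≠ 0 := by
      intro h2
      apply hdw
      apply P.tor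
      have e : d w + d w = d (w + x) + d (w - x) := by
        rw [P.dadd, dsub P]; abel
      rw [e, h1, h2, add_zero]
    have hcross1 : ∀ r a b : R, a ∈ U → b ∈ U →
        d (w - x) * r * ((a * (w + x) - (w + x) * a) * (b * (w + x) - (w + x) * b)) = 0 := by
      intro r a b ha hb
      have e2 : d (w - x) * r * ((a * (w + x) - (w + x) * a) * (b * (w + x) - (w + x) * b))
          = -(d (w - x) * r * ((a * (w - x) - (w - x) * a) * (b * (w - x) - (w - x) * b)))
            + (d (w - x) * r * ((a * w - w * a) * (b * w - w * b))
               + d (w - x) * r * ((a * w - w * a) * (b * w - w * b)))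
            + (d (w - x) * r * ((a * x - x * a) * (b * x - x * b))
               + d (w - x) * r * ((a * x - x * a) * (b * x - x * b))) := by noncomm_ring
      rw [e2, cBHK P hv ha hb r, cDeg P hw hεw hdw ha hb, cDeg P hx hεx hdx ha hb]
      simp
    have hdeg : ∀ a b : R, a ∈ U → b ∈ U →
        (a * (w - x) - (w - x) * a) * (b * (w - x) - (w - x) * b) = 0 := by
      intro a b ha hb
      rcases hεw with hw1 | hw1 <;> rcases hεx with hx1 | hx1
      · exact hspDeg P hv (Or.inl (by rw [sigsub P, hw1, hx1])) hd2
          (fun r a b ha hb => cBHK P hv ha hb r) ha hb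
      · exact hspDeg P hv (Or.inl (show σ (w - x) = w + x by
          rw [sigsub P, hw1, hx1]; abel)) hd2 hcross1 ha hb
      · exact hspDeg P hv (Or.inr (show σ (w - x) = -(w + x) by
          rw [sigsub P, hw1, hx1]; abel)) hd2 hcross1 ha hb
      · exact hspDeg P hv (Or.inr (show σ (w - x) = -(w - x) by
          rw [sigsub P, hw1, hx1]; abel)) hd2
          (fun r a b ha hb => cBHK P hv ha hb r) ha hb
    have e3 : (a * w - w * a) * (b * x - x * b) + (a * x - x * a) * (b * w - w * b)
        = -((a * (w - x) - (w - x) * a) * (b * (w - x) - (w - x) * b))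
          + (a * w - w * a) * (b * w - w * b) + (a * x - x * a) * (b * x - x * b) := by
      noncomm_ring
    rw [e3, hdeg a b ha hb, cDeg P hw hεw hdw ha hb, cDeg P hx hεx hdx ha hb]
    simp
  · have hv : w + x ∈ U := U.add_mem hw hx
    have hcross1 : ∀ r a b : R, a ∈ U → b ∈ U →
        d (w + x) * r * ((a * (w - x) - (w - x) * a) * (b * (w - x) - (w - x) * b)) = 0 := by
      intro r a b ha hb
      have e2 : d (w + x) * r * ((a * (w - x) - (w - x) * a) * (b * (w - x) - (w - x) * b))
          = -(d (w + x) * r * ((a * (w + x) - (w + x) * a) * (b * (w + x) - (w + x) * b)))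
            + (d (w + x) * r * ((a * w - w * a) * (b * w - w * b))
               + d (w + x) * r * ((a * w - w * a) * (b * w - w * b)))
            + (d (w + x) * r * ((a * x - x * a) * (b * x - x * b))
               + d (w + x) * r * ((a * x - x * a) * (b * x - x * b))) := by noncomm_ring
      rw [e2, cBHK P hv ha hb r, cDeg P hw hεw hdw ha hb, cDeg P hx hεx hdx ha hb]
      simp
    have hdeg : ∀ a b : R, a ∈ U → b ∈ U →
        (a * (w + x) - (w + x) * a) * (b * (w + x) - (w + x) * b) = 0 := by
      intro a b ha hb
      rcases hεw with hw1 | hw1 <;> rcases hεx with hx1 | hx1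
      · exact hspDeg P hv (Or.inl (by rw [P.hadd, hw1, hx1])) h1
          (fun r a b ha hb => cBHK P hv ha hb r) ha hb
      · exact hspDeg P hv (Or.inl (show σ (w + x) = w - x by
          rw [P.hadd, hw1, hx1]; abel)) h1 hcross1 ha hb
      · exact hspDeg P hv (Or.inr (show σ (w + x) = -(w - x) by
          rw [P.hadd, hw1, hx1]; abel)) h1 hcross1 ha hb
      · exact hspDeg P hv (Or.inr (show σ (w + x) = -(w + x) by
          rw [P.hadd, hw1, hx1]; abel)) h1
          (fun r a b ha hb => cBHK P hv ha hb r) ha hb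
    have e3 : (a * w - w * a) * (b * x - x * b) + (a * x - x * a) * (b * w - w * b)
        = (a * (w + x) - (w + x) * a) * (b * (w + x) - (w + x) * b)
          - (a * w - w * a) * (b * w - w * b) - (a * x - x * a) * (b * x - x * b) := by
      noncomm_ring
    rw [e3, hdeg a b ha hb, cDeg P hw hεw hdw ha hb, cDeg P hx hεx hdx ha hb]
    simp

lemma sigz (P : Pack σ U d) {w x : R} (hεw : σ w = w ∨ σ w = -w)
    (hεx : σ x = x ∨ σ x = -x) :
    σ (x * w - w * x) = x * w - w * x ∨ σ (x * w - w * x) = -(x * w - w * x) := by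
  have e0 : σ (x * w - w * x) = σ w * σ x - σ x * σ w := by
    rw [sigsub P, P.hmul, P.hmul]
  rcases hεw with hw1 | hw1 <;> rcases hεx with hx1 | hx1
  · right; rw [e0, hw1, hx1]; noncomm_ring
  · left; rw [e0, hw1, hx1]; noncomm_ring
  · left; rw [e0, hw1, hx1]; noncomm_ring
  · right; rw [e0, hw1, hx1]; noncomm_ring

/-- kill when d x ≠ 0 -/
lemma cKill1 (P : Pack σ U d) {w x : R} (hw : w ∈ U) (hx : x ∈ U)
    (hεw : σ w = w ∨ σ w = -w) (hεx : σ x = x ∨ σ x = -x)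
    (hdw : d w ≠ 0) (hdx : d x ≠ 0) : x * w - w * x = 0 := by
  have hzz : ∀ r : R, (x * w - w * x) * r * (x * w - w * x) = 0 := by
    intro r
    have hδr : r * w - w * r ∈ U := by
      have h := U.neg_mem (P.lie w hw r)
      rwa [neg_sub] at h
    have h1 := cDeg P hw hεw hdw hx (P.lie x hx r)
    have h2 : (x * w - w * x) * ((r * w - w * r) * x - x * (r * w - w * r)) = 0 := by
      have hmx := cMX P hw hx hεw hεx hdw hdx hx hδr
      have e : (x * w - w * x) * ((r * w - w * r) * x - x * (r * w - w * r))
          = (x * w - w * x) * ((r * w - w * r) * x - x * (r * w - w * r))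
            + (x * x - x * x) * ((r * w - w * r) * w - w * (r * w - w * r)) := by noncomm_ring
      rw [e]; exact hmx
    have hzz0 := cDeg P hw hεw hdw hx hx
    have e : (x * w - w * x) * r * (x * w - w * x)
        = ((x * w - w * x) * (x * w - w * x)) * r
          - (x * w - w * x) * ((r * w - w * r) * x - x * (r * w - w * r))
          - (x * w - w * x) * ((x * r - r * x) * w - w * (x * r - r * x)) := by noncomm_ring
    rw [e, hzz0, h2, h1]
    simp
  have hσside : ∀ r : R, σ (x * w - w * x) * r * (x * w - w * x) = 0 := by
    intro r
    rcases sigz P hεw hεx with h | h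
    · rw [h]; exact hzz r
    · rw [h]
      have e : -(x * w - w * x) * r * (x * w - w * x)
          = -((x * w - w * x) * r * (x * w - w * x)) := by noncomm_ring
      rw [e, hzz r, neg_zero]
  rcases hsp' P hzz hσside with h | h
  · exact h
  · exact h

/-- kill when d x = 0 -/
lemma cKill0 (P : Pack σ U d) {w x : R} (hw : w ∈ U) (hx : x ∈ U)
    (hεw : σ w = w ∨ σ w = -w) (hεx : σ x = x ∨ σ x = -x)
    (hdw : d w ≠ 0) (hdx : d x = 0) : x * w - w * x = 0 := by
  have h1 : ∀ Y : R, (x * w - w * x) * Y * d w = 0 := by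
    intro Y
    have h := cY6' P hw hx Y
    rw [hdx, zero_mul, add_zero] at h
    exact h
  have hσside : ∀ Y : R, σ (x * w - w * x) * Y * d w = 0 := by
    intro Y
    rcases sigz P hεw hεx with h | h
    · rw [h]; exact h1 Y
    · rw [h]
      have e : -(x * w - w * x) * Y * d w = -((x * w - w * x) * Y * d w) := by noncomm_ring
      rw [e, h1 Y, neg_zero]
  rcases hsp' P h1 hσside with h | h
  · exact h
  · exact absurd h hdw

/-- S_w = 0 -/
lemma cSzero (P : Pack σ U d) {w : R} (hw : w ∈ U) (hεw : σ w = w ∨ σ w = -w)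
    (hdw : d w ≠ 0) {y : R} (hy : y ∈ U) : y * w - w * y = 0 := by
  have hs : y + σ y ∈ U := U.add_mem hy (P.sU y hy)
  have hk : y - σ y ∈ U := U.sub_mem hy (P.sU y hy)
  have hεs : σ (y + σ y) = y + σ y ∨ σ (y + σ y) = -(y + σ y) :=
    Or.inl (by rw [P.hadd, P.hinv, add_comm])
  have hεk : σ (y - σ y) = y - σ y ∨ σ (y - σ y) = -(y - σ y) :=
    Or.inr (by rw [sigsub P, P.hinv, neg_sub])
  have h1 : (y + σ y) * w - w * (y + σ y) = 0 := by
    by_cases h : d (y + σ y) = 0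
    · exact cKill0 P hw hs hεw hεs hdw h
    · exact cKill1 P hw hs hεw hεs hdw h
  have h2 : (y - σ y) * w - w * (y - σ y) = 0 := by
    by_cases h : d (y - σ y) = 0
    · exact cKill0 P hw hk hεw hεk hdw h
    · exact cKill1 P hw hk hεw hεk hdw h
  refine P.tor _ ?_
  have e : (y * w - w * y) + (y * w - w * y)
      = ((y + σ y) * w - w * (y + σ y)) + ((y - σ y) * w - w * (y - σ y)) := by noncomm_ring
  rw [e, h1, h2, add_zero]

/-- nil: vanishing double commutators force centrality -/
lemma cNIL (P : Pack σ U d) {v : R}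
    (hδ2 : ∀ r : R, (r * v - v * r) * v - v * (r * v - v * r) = 0) :
    ∀ r : R, v * r = r * v := by
  have hprod : ∀ a b : R, (a * v - v * a) * (b * v - v * b) = 0 := by
    intro a b
    refine P.tor _ ?_
    have e : (a * v - v * a) * (b * v - v * b) + (a * v - v * a) * (b * v - v * b)
        = ((a * b * v - v * (a * b)) * v - v * (a * b * v - v * (a * b)))
          - ((a * v - v * a) * v - v * (a * v - v * a)) * b
          - a * ((b * v - v * b) * v - v * (b * v - v * b)) := by noncomm_ring
    rw [e, hδ2 (a * b), hδ2 a, hδ2 b]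
    simp
  have hsand : ∀ a y : R, (a * v - v * a) * y * (a * v - v * a) = 0 := by
    intro a y
    have e : (a * v - v * a) * y * (a * v - v * a)
        = (a * y * v - v * (a * y)) * (a * v - v * a)
          - a * ((y * v - v * y) * (a * v - v * a)) := by noncomm_ring
    rw [e, hprod (a * y) a, hprod y a]
    simp
  intro r
  have h := semiprime P (fun y => hsand r y)
  have h2 := sub_eq_zero.mp h
  exact h2.symm

/-- main per-element result -/
lemma cMain (P : Pack σ U d) {w : R} (hw : w ∈ U) (hεw : σ w = w ∨ σ w = -w)
    (hdw : d w ≠ 0) : ∀ r : R, w * r = r * w := by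
  apply cNIL P
  intro r
  have hm : r * w - w * r ∈ U := by
    have h := U.neg_mem (P.lie w hw r)
    rwa [neg_sub] at h
  exact cSzero P hw hεw hdw hm

/-- derivative of a central element of U is central -/
lemma cCentD (P : Pack σ U d) {u : R} (hu : u ∈ U) (hcu : ∀ r : R, u * r = r * u) :
    ∀ r : R, d u * r = r * d u := by
  intro r
  have e : d u * r + u * d r = d r * u + r * d u := by
    calc d u * r + u * d r = d (u * r) := (P.dmul u r).symm
      _ = d (r * u) := by rw [hcu r]
      _ = d r * u + r * d u := P.dmul r u
  rw [hcu (d r)] at e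
  calc d u * r = (d u * r + d r * u) - d r * u := by abel
    _ = (d r * u + r * d u) - d r * u := by rw [e]
    _ = r * d u := by abel

/-- central symmetric elements have zero derivative (given a noncentral symmetric witness with zero derivative) -/
lemma cCentKill (P : Pack σ U d) {u w₀ : R} (hu : u ∈ U) (hεu : σ u = u ∨ σ u = -u)
    (hcu : ∀ r : R, u * r = r * u) (hw₀ : w₀ ∈ U) (hεw : σ w₀ = w₀ ∨ σ w₀ = -w₀)
    (hdw₀ : d w₀ = 0) (hnc : ∃ r : R, ¬ (w₀ * r = r * w₀)) : d u = 0 := by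
  have ht : u * w₀ + u * w₀ ∈ U := U2 P hu hw₀
  have hεt : σ (u * w₀ + u * w₀) = u * w₀ + u * w₀
      ∨ σ (u * w₀ + u * w₀) = -(u * w₀ + u * w₀) := by
    have e0 : σ (u * w₀ + u * w₀) = σ w₀ * σ u + σ w₀ * σ u := by rw [P.hadd, P.hmul]
    rcases hεu with h1 | h1 <;> rcases hεx : hεw with h2 | h2
    · left; rw [e0, h1, h2, hcu w₀]
    · right; rw [e0, h1, h2, hcu w₀]; noncomm_ring
    · right; rw [e0, h1, h2, hcu w₀]; noncomm_ring
    · left; rw [e0, h1, h2, hcu w₀]; noncomm_ring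
  by_cases hdt : d (u * w₀ + u * w₀) = 0
  · have hduw : d u * w₀ = 0 := by
      apply P.tor
      have e : d u * w₀ + d u * w₀
          = d (u * w₀ + u * w₀) - (u * d w₀ + u * d w₀) := by
        rw [P.dadd, P.dmul]; abel
      rw [e, hdt, hdw₀, mul_zero]
      simp
    have hcdu := cCentD P hu hcu
    have hd1 : ∀ r : R, d u * r * w₀ = 0 := by
      intro r
      calc d u * r * w₀ = r * d u * w₀ := by rw [hcdu r]
        _ = r * (d u * w₀) := by rw [mul_assoc]
        _ = 0 := by rw [hduw, mul_zero]
    have hscent : ∀ s : R, σ (d u) * s = s * σ (d u) := by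
      intro s
      have h := hcdu (σ s)
      have e1 : σ (d u * σ s) = σ (σ s * d u) := by rw [h]
      rw [P.hmul, P.hmul, P.hinv] at e1
      exact e1.symm
    have hd2 : ∀ r : R, σ (d u) * r * w₀ = 0 := by
      intro r
      have h := congrArg σ hduw
      rw [P.hmul, sig0 P] at h
      have hw : w₀ * σ (d u) = 0 := by
        rcases hεw with h2 | h2
        · rwa [h2] at h
        · rw [h2] at h
          have e : w₀ * σ (d u) = -(-w₀ * σ (d u)) := by noncomm_ring
          rw [e, h, neg_zero]
      calc σ (d u) * r * w₀ = r * σ (d u) * w₀ := by rw [hscent r]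
        _ = r * (σ (d u) * w₀) := by rw [mul_assoc]
        _ = r * (w₀ * σ (d u)) := by rw [hscent w₀]
        _ = 0 := by rw [hw, mul_zero]
    rcases hsp' P hd1 hd2 with h | h
    · exact h
    · exfalso; obtain ⟨r₁, hr₁⟩ := hnc; apply hr₁; rw [h, zero_mul, mul_zero]
  · have hctr := cMain P ht hεt hdt
    have hub : ∀ r : R, u * (w₀ * r - r * w₀) = 0 := by
      intro r
      apply P.tor
      have e : u * (w₀ * r - r * w₀) + u * (w₀ * r - r * w₀)
          = ((u * w₀ + u * w₀) * r - r * (u * w₀ + u * w₀))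
            + ((r * u - u * r) * w₀ + (r * u - u * r) * w₀) := by noncomm_ring
      have h0 : (u * w₀ + u * w₀) * r - r * (u * w₀ + u * w₀) = 0 := by
        rw [hctr r, sub_self]
      have h1 : r * u - u * r = 0 := by rw [hcu r, sub_self]
      rw [e, h0, h1, zero_mul, add_zero, add_zero]
    obtain ⟨r₁, hr₁⟩ := hnc
    have key : ∀ s q : R, u * s * (w₀ * q - q * w₀) = 0 := by
      intro s q
      calc u * s * (w₀ * q - q * w₀) = s * u * (w₀ * q - q * w₀) := by rw [hcu s]
        _ = s * (u * (w₀ * q - q * w₀)) := by rw [mul_assoc]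
        _ = 0 := by rw [hub q, mul_zero]
    have hu2 : ∀ s : R, u * s * σ (w₀ * r₁ - r₁ * w₀) = 0 := by
      intro s
      have e0 : σ (w₀ * r₁ - r₁ * w₀) = σ r₁ * σ w₀ - σ w₀ * σ r₁ := by
        rw [sigsub P, P.hmul, P.hmul]
      rcases hεw with h2 | h2
      · rw [e0, h2]
        have e : u * s * (σ r₁ * w₀ - w₀ * σ r₁)
            = -(u * s * (w₀ * σ r₁ - σ r₁ * w₀)) := by noncomm_ring
        rw [e, key s (σ r₁), neg_zero]
      · rw [e0, h2]
        have e : u * s * (σ r₁ * -w₀ - -w₀ * σ r₁)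
            = u * s * (w₀ * σ r₁ - σ r₁ * w₀) := by noncomm_ring
        rw [e, key s (σ r₁)]
    rcases P.sp _ _ (fun s => key s r₁) hu2 with h | h
    · rw [h]; exact d0 P
    · exfalso; exact hr₁ (sub_eq_zero.mp h)

/-- d vanishes on U -/
lemma cDU (P : Pack σ U d) {u₀ r₂ : R} (hu₀ : u₀ ∈ U) (hr₂ : ¬ (u₀ * r₂ = r₂ * u₀)) :
    ∀ y ∈ U, d y = 0 := by
  have hsmem : u₀ + σ u₀ ∈ U := U.add_mem hu₀ (P.sU _ hu₀)
  have hkmem : u₀ - σ u₀ ∈ U := U.sub_mem hu₀ (P.sU _ hu₀)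
  have hεs : σ (u₀ + σ u₀) = u₀ + σ u₀ ∨ σ (u₀ + σ u₀) = -(u₀ + σ u₀) :=
    Or.inl (by rw [P.hadd, P.hinv, add_comm])
  have hεk : σ (u₀ - σ u₀) = u₀ - σ u₀ ∨ σ (u₀ - σ u₀) = -(u₀ - σ u₀) :=
    Or.inr (by rw [sigsub P, P.hinv, neg_sub])
  have hwit : ∃ w₀, w₀ ∈ U ∧ (σ w₀ = w₀ ∨ σ w₀ = -w₀) ∧ (∃ r, ¬ (w₀ * r = r * w₀)) := by
    by_cases hcs : ∀ r : R, (u₀ + σ u₀) * r = r * (u₀ + σ u₀)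
    · by_cases hck : ∀ r : R, (u₀ - σ u₀) * r = r * (u₀ - σ u₀)
      · exfalso
        apply hr₂
        have e : (u₀ * r₂ - r₂ * u₀) + (u₀ * r₂ - r₂ * u₀)
            = ((u₀ + σ u₀) * r₂ - r₂ * (u₀ + σ u₀))
              + ((u₀ - σ u₀) * r₂ - r₂ * (u₀ - σ u₀)) := by noncomm_ring
        have h0 : (u₀ * r₂ - r₂ * u₀) + (u₀ * r₂ - r₂ * u₀) = 0 := by
          rw [e, hcs r₂, hck r₂, sub_self, sub_self, add_zero]
        exact sub_eq_zero.mp (P.tor _ h0)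
      · push_neg at hck; obtain ⟨r₃, hr₃⟩ := hck
        exact ⟨u₀ - σ u₀, hkmem, hεk, ⟨r₃, hr₃⟩⟩
    · push_neg at hcs; obtain ⟨r₃, hr₃⟩ := hcs
      exact ⟨u₀ + σ u₀, hsmem, hεs, ⟨r₃, hr₃⟩⟩
  obtain ⟨w₀, hw₀U, hεw, hwnc⟩ := hwit
  have hdw₀ : d w₀ = 0 := by
    by_contra hdw
    obtain ⟨r₃, hr₃⟩ := hwnc
    exact hr₃ (cMain P hw₀U hεw hdw r₃)
  have hsym : ∀ y : R, y ∈ U → (σ y = y ∨ σ y = -y) → d y = 0 := by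
    intro y hy hεy
    by_cases hcy : ∀ r : R, y * r = r * y
    · exact cCentKill P hy hεy hcy hw₀U hεw hdw₀ hwnc
    · by_contra hdy
      push_neg at hcy; obtain ⟨r₄, hr₄⟩ := hcy
      exact hr₄ (cMain P hy hεy hdy r₄)
  intro y hy
  have h1 := hsym (y + σ y) (U.add_mem hy (P.sU y hy))
    (Or.inl (by rw [P.hadd, P.hinv, add_comm]))
  have h2 := hsym (y - σ y) (U.sub_mem hy (P.sU y hy))
    (Or.inr (by rw [sigsub P, P.hinv, neg_sub]))
  apply P.tor
  have e : d y + d y = d (y + σ y) + d (y - σ y) := by rw [P.dadd, dsub P]; abel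
  rw [e, h1, h2, add_zero]

/-- if d vanishes on a noncentral U then d = 0 -/
lemma cLemD (P : Pack σ U d) {u₀ r₂ : R} (hu₀ : u₀ ∈ U) (hr₂ : ¬ (u₀ * r₂ = r₂ * u₀))
    (hdU : ∀ y ∈ U, d y = 0) (X : R) : d X = 0 := by
  have hcomm : ∀ u ∈ U, ∀ Y : R, u * d Y = d Y * u := by
    intro u hu Y
    have h := hdU _ (P.lie u hu Y)
    rw [dsub P, P.dmul, P.dmul, hdU u hu] at h
    simp only [zero_mul, mul_zero, zero_add, add_zero] at h
    exact sub_eq_zero.mp h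
  have hld1 : ∀ x y : R, ∀ u ∈ U, d x * (y * u - u * y) + (x * u - u * x) * d y = 0 := by
    intro x y u hu
    have e : d x * (y * u - u * y) + (x * u - u * x) * d y
        = ((d x * y + x * d y) * u - u * (d x * y + x * d y))
          - (d x * u - u * d x) * y + x * (u * d y - d y * u) := by noncomm_ring
    rw [e, ← P.dmul x y, ← hcomm u hu (x * y), ← hcomm u hu x, hcomm u hu y]
    simp
  have hld2 : ∀ x m : R, ∀ v ∈ U, ∀ u ∈ U, d x * m * (v * u - u * v) = 0 := by
    intro x m v hv u hu
    have h1 := hld1 (x * m) v u hu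
    rw [hdU v hv, mul_zero, add_zero, P.dmul] at h1
    have h2 := hld1 m v u hu
    rw [hdU v hv, mul_zero, add_zero] at h2
    have e : d x * m * (v * u - u * v)
        = (d x * m + x * d m) * (v * u - u * v) - x * (d m * (v * u - u * v)) := by
      noncomm_ring
    rw [e, h1, h2, mul_zero, sub_zero]
  by_cases hUU : ∀ v ∈ U, ∀ u ∈ U, v * u - u * v = 0
  · exfalso
    apply hr₂
    have hδ2 : ∀ r : R, (r * u₀ - u₀ * r) * u₀ - u₀ * (r * u₀ - u₀ * r) = 0 := by
      intro r
      have hm : r * u₀ - u₀ * r ∈ U := by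
        have h := U.neg_mem (P.lie u₀ hu₀ r)
        rwa [neg_sub] at h
      exact hUU _ hm _ hu₀
    exact cNIL P hδ2 r₂
  · push_neg at hUU
    obtain ⟨v₁, hv₁, u₁, hu₁, hne⟩ := hUU
    have hσside : ∀ m : R, d X * m * σ (v₁ * u₁ - u₁ * v₁) = 0 := by
      intro m
      have e0 : σ (v₁ * u₁ - u₁ * v₁) = σ u₁ * σ v₁ - σ v₁ * σ u₁ := by
        rw [sigsub P, P.hmul, P.hmul]
      rw [e0]
      exact hld2 X m _ (P.sU _ hu₁) _ (P.sU _ hv₁)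
    rcases P.sp _ _ (fun m => hld2 X m _ hv₁ _ hu₁) hσside with h | h
    · exact h
    · exact absurd h hne

end Stmt8Aux

theorem stmt8 (R : Type*) [Ring R]
  (σ : R → R)
  (hσadd : ∀ x y : R, σ (x + y) = σ x + σ y)
  (hσmul : ∀ x y : R, σ (x * y) = σ y * σ x)
  (hσinv : ∀ x : R, σ (σ x) = x)
  (htor : ∀ x : R, x + x = 0 → x = 0)
  (hsp : ∀ a b : R, (∀ r : R, a * r * b = 0) → (∀ r : R, a * r * σ b = 0) → a = 0 ∨ b = 0)
  (U : AddSubgroup R)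
  (hLie : ∀ u ∈ U, ∀ r : R, u * r - r * u ∈ U)
  (hσU : ∀ u ∈ U, σ u ∈ U)
  (hsq : ∀ u ∈ U, u * u ∈ U)
  (d : R → R)
  (hdadd : ∀ x y : R, d (x + y) = d x + d y)
  (hdmul : ∀ x y : R, d (x * y) = d x * y + x * d y)
  (hcent : ∀ u ∈ U, ∀ r : R, (d u * u - u * d u) * r = r * (d u * u - u * d u)) :
    (∀ u ∈ U, ∀ r : R, u * r = r * u) ∨ (∀ x : R, d x = 0) := by
  have P : Stmt8Aux.Pack σ U d :=
    ⟨hσadd, hσmul, hσinv, htor, hsp, hLie, hσU, hsq, hdadd, hdmul, hcent⟩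
  by_cases hZ : ∀ u ∈ U, ∀ r : R, u * r = r * u
  · left; exact hZ
  · right
    push_neg at hZ
    obtain ⟨u₀, hu₀, r₂, hr₂⟩ := hZ
    intro X
    exact Stmt8Aux.cLemD P hu₀ hr₂ (Stmt8Aux.cDU P hu₀ hr₂) X
end

section
/- Let R be a 2-torsion free σ-prime ring, U a square closed σ-Lie ideal of R, and d a derivation of R which commutes with σ on U (d(σ(u)) = σ(d(u)) for all u ∈ U). If [d(x), d(y)] = d([y,x]) for all x, y ∈ U, then d = 0 or U ⊆ Z(R). -/
set_option maxHeartbeats 4000000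

namespace Stmt10Aux

structure Ctx (R : Type*) [Ring R] where
  sg : R → R
  sgadd : ∀ x y : R, sg (x + y) = sg x + sg y
  sgmul : ∀ x y : R, sg (x * y) = sg y * sg x
  sginv : ∀ x : R, sg (sg x) = x
  tor : ∀ x : R, x + x = 0 → x = 0
  sp : ∀ a b : R, (∀ r : R, a * r * b = 0) → (∀ r : R, a * r * sg b = 0) → a = 0 ∨ b = 0
  U : AddSubgroup R
  lie : ∀ u ∈ U, ∀ r : R, u * r - r * u ∈ U
  sgU : ∀ u ∈ U, sg u ∈ U
  sqU : ∀ u ∈ U, u * u ∈ U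
  hnc : ∃ u ∈ U, ∃ r : R, u * r ≠ r * u

variable {R : Type*} [Ring R]

lemma Ctx.sg_zero (C : Ctx R) : C.sg 0 = 0 := by
  have h := C.sgadd 0 0
  rw [add_zero] at h
  exact (left_eq_add.mp h)

lemma Ctx.sg_neg (C : Ctx R) (x : R) : C.sg (-x) = -C.sg x := by
  have h := C.sgadd x (-x)
  rw [add_neg_cancel, C.sg_zero] at h
  exact eq_neg_of_add_eq_zero_right h.symm

lemma Ctx.sg_sub (C : Ctx R) (x y : R) : C.sg (x - y) = C.sg x - C.sg y := by
  rw [sub_eq_add_neg, C.sgadd, C.sg_neg, ← sub_eq_add_neg]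

lemma Ctx.sg_inj (C : Ctx R) {x : R} (h : C.sg x = 0) : x = 0 := by
  rw [← C.sginv x, h, C.sg_zero]

lemma Ctx.sg_comm (C : Ctx R) (a b : R) : C.sg (a * b - b * a) = C.sg b * C.sg a - C.sg a * C.sg b := by
  rw [C.sg_sub, C.sgmul, C.sgmul]

lemma Ctx.half (C : Ctx R) {x y : R} (h : x + x = y + y) : x = y := by
  have h2 : (x - y) + (x - y) = 0 := by
    rw [sub_add_sub_comm, h, sub_self]
  exact sub_eq_zero.mp (C.tor _ h2)

lemma Ctx.s1 (C : Ctx R) (a b : R) (h1 : ∀ r : R, a * r * b = 0) (h2 : ∀ r : R, C.sg a * r * b = 0) :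
    a = 0 ∨ b = 0 := by
  have k1 : ∀ r : R, C.sg b * r * a = 0 := by
    intro r
    have h3 := congrArg C.sg (h2 (C.sg r))
    rw [C.sg_zero, C.sgmul, C.sgmul, C.sginv, C.sginv, ← mul_assoc] at h3
    exact h3
  have k2 : ∀ r : R, C.sg b * r * C.sg a = 0 := by
    intro r
    have h3 := congrArg C.sg (h1 (C.sg r))
    rw [C.sg_zero, C.sgmul, C.sgmul, C.sginv, ← mul_assoc] at h3
    exact h3
  rcases C.sp (C.sg b) a k1 k2 with h | h
  · right; exact C.sg_inj h
  · left; exact h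

lemma Ctx.twomul (C : Ctx R) (u v : R) (hu : u ∈ C.U) (hv : v ∈ C.U) : u * v + u * v ∈ C.U := by
  have key : u * v + u * v = ((u + v) * (u + v) - u * u - v * v) + (u * v - v * u) := by
    noncomm_ring
  rw [key]
  exact add_mem (sub_mem (sub_mem (C.sqU _ (add_mem hu hv)) (C.sqU _ hu)) (C.sqU _ hv))
    (C.lie u hu v)

lemma Ctx.lemD (C : Ctx R) (hcomm : ∀ u ∈ C.U, ∀ v ∈ C.U, u * v = v * u) :
    ∀ u ∈ C.U, ∀ r : R, u * r = r * u := by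
  intro u hu r₀
  have hsu : C.sg u ∈ C.U := C.sgU u hu
  have d1 : ∀ r s : R, (u * r - r * u) * (u * s - s * u) = 0 := by
    intro r s
    have K1 := hcomm u hu _ (C.lie u hu (r * s))
    have K2 := hcomm u hu _ (C.lie u hu r)
    have K3 := hcomm u hu _ (C.lie u hu s)
    refine C.tor _ ?_
    linear_combination (norm := noncomm_ring) K1 - K2 * s - r * K3
  have d2 : ∀ r t s : R, (u * r - r * u) * t * (u * s - s * u) = 0 := by
    intro r t s
    linear_combination (norm := noncomm_ring) d1 r (t * s) - d1 r t * s
  have d3 : ∀ r s : R,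
      (u * r - r * u) * (C.sg u * s - s * C.sg u) + (C.sg u * r - r * C.sg u) * (u * s - s * u) = 0 := by
    intro r s
    have K1 := hcomm (C.sg u) hsu _ (C.lie u hu (r * s))
    have K2 := hcomm (C.sg u) hsu _ (C.lie u hu r)
    have K3 := hcomm (C.sg u) hsu _ (C.lie u hu s)
    linear_combination (norm := noncomm_ring) K1 - K2 * s - r * K3
  have d4 : ∀ r t s : R,
      (u * r - r * u) * t * (C.sg u * s - s * C.sg u) + (C.sg u * r - r * C.sg u) * t * (u * s - s * u) = 0 := by
    intro r t s
    linear_combination (norm := noncomm_ring) d3 (r * t) s - r * d3 t s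
  have d5 : ∀ r t s : R, (u * r - r * u) * t * (C.sg u * s - s * C.sg u) = 0 := by
    intro r t s
    have h1 : ∀ w : R,
        ((u * r - r * u) * t * (C.sg u * s - s * C.sg u)) * w *
          ((u * r - r * u) * t * (C.sg u * s - s * C.sg u)) = 0 := by
      intro w
      linear_combination (norm := noncomm_ring)
        ((u * r - r * u) * t) * d4 s w r * (t * (C.sg u * s - s * C.sg u))
        - d2 r t s * (w * ((C.sg u * r - r * C.sg u) * (t * (C.sg u * s - s * C.sg u))))
    have hsX : C.sg ((u * r - r * u) * t * (C.sg u * s - s * C.sg u))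
        = (C.sg s * u - u * C.sg s) * (C.sg t * (C.sg r * C.sg u - C.sg u * C.sg r)) := by
      rw [C.sgmul, C.sgmul, C.sg_comm, C.sg_comm, C.sginv]
    have h2 : ∀ w : R,
        ((u * r - r * u) * t * (C.sg u * s - s * C.sg u)) * w *
          C.sg ((u * r - r * u) * t * (C.sg u * s - s * C.sg u)) = 0 := by
      intro w
      rw [hsX]
      linear_combination (norm := noncomm_ring)
        - ((u * r - r * u) * t) * d4 s w (C.sg s) * (C.sg t * (C.sg r * C.sg u - C.sg u * C.sg r))
        + d2 r t s * (w * ((C.sg u * C.sg s - C.sg s * C.sg u) * (C.sg t * (C.sg r * C.sg u - C.sg u * C.sg r))))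
    rcases C.sp _ _ h1 h2 with h | h
    · exact h
    · exact h
  have h2 : ∀ t : R, (u * r₀ - r₀ * u) * t * C.sg (u * r₀ - r₀ * u) = 0 := by
    intro t
    rw [C.sg_comm]
    linear_combination (norm := noncomm_ring) - d5 r₀ t (C.sg r₀)
  rcases C.sp _ _ (fun t => d2 r₀ t r₀) h2 with h | h
  · exact sub_eq_zero.mp h
  · exact sub_eq_zero.mp h

lemma Ctx.exists_noncomm (C : Ctx R) : ∃ u ∈ C.U, ∃ v ∈ C.U, u * v ≠ v * u := by
  by_contra hcon
  push_neg at hcon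
  obtain ⟨u, hu, r, hne⟩ := C.hnc
  exact hne (C.lemD hcon u hu r)

lemma Ctx.cz (C : Ctx R) (c : R) (h : ∀ u ∈ C.U, c * u = u * c) : ∀ s : R, c * s = s * c := by
  have st1 : ∀ u ∈ C.U, ∀ r : R, u * (c * r - r * c) - (c * r - r * c) * u = 0 := by
    intro u hu r
    have A1 := h _ (C.lie u hu r)
    have A2 := h u hu
    linear_combination (norm := noncomm_ring) A1 - A2 * r + r * A2
  have st2 : ∀ u ∈ C.U, ∀ r s : R,
      (c * r - r * c) * (u * s - s * u) + (u * r - r * u) * (c * s - s * c) = 0 := by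
    intro u hu r s
    linear_combination (norm := noncomm_ring) st1 u hu (r * s) - st1 u hu r * s - r * st1 u hu s
  have st3 : ∀ u ∈ C.U, ∀ u' ∈ C.U, ∀ s : R, (u * u' - u' * u) * (c * s - s * c) = 0 := by
    intro u hu u' hu' s
    have A3 := h u' hu'
    linear_combination (norm := noncomm_ring) st2 u hu u' s - A3 * (u * s - s * u)
  have st4 : ∀ u ∈ C.U, ∀ u' ∈ C.U, ∀ t s : R, (u * u' - u' * u) * t * (c * s - s * c) = 0 := by
    intro u hu u' hu' t s
    linear_combination (norm := noncomm_ring) st3 u hu u' hu' (t * s) - st3 u hu u' hu' t * s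
  intro s
  obtain ⟨w₁, hw₁, w₂, hw₂, hw⟩ := C.exists_noncomm
  have harg2 : ∀ t : R, C.sg (w₁ * w₂ - w₂ * w₁) * t * (c * s - s * c) = 0 := by
    intro t
    rw [C.sg_comm]
    exact st4 (C.sg w₂) (C.sgU _ hw₂) (C.sg w₁) (C.sgU _ hw₁) t s
  rcases C.s1 (w₁ * w₂ - w₂ * w₁) (c * s - s * c) (fun t => st4 w₁ hw₁ w₂ hw₂ t s) harg2 with hh | hh
  · exact absurd (sub_eq_zero.mp hh) hw
  · exact (sub_eq_zero.mp hh)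

lemma Ctx.sg_central (C : Ctx R) (z : R) (hz : ∀ s : R, z * s = s * z) : ∀ s : R, C.sg z * s = s * C.sg z := by
  intro s
  have h1 := congrArg C.sg (hz (C.sg s))
  rw [C.sgmul, C.sgmul, C.sginv] at h1
  exact h1.symm

lemma Ctx.centnil (C : Ctx R) (z : R) (hz : ∀ s : R, z * s = s * z) (h2 : z * z = 0) : z = 0 := by
  have hsz := C.sg_central z hz
  have ht : ∀ s : R, (z * C.sg z) * s = s * (z * C.sg z) := by
    intro s
    rw [mul_assoc, hsz s, ← mul_assoc, hz s, mul_assoc]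
  have htt : (z * C.sg z) * (z * C.sg z) = 0 := by
    calc (z * C.sg z) * (z * C.sg z) = z * (C.sg z * z) * C.sg z := by noncomm_ring
      _ = z * (z * C.sg z) * C.sg z := by rw [hsz z]
      _ = (z * z) * (C.sg z * C.sg z) := by noncomm_ring
      _ = 0 := by rw [h2, zero_mul]
  have hst : C.sg (z * C.sg z) = z * C.sg z := by
    rw [C.sgmul, C.sginv]
  have k1 : ∀ r : R, (z * C.sg z) * r * (z * C.sg z) = 0 := by
    intro r
    rw [ht r, mul_assoc, htt, mul_zero]
  have k2 : ∀ r : R, (z * C.sg z) * r * C.sg (z * C.sg z) = 0 := by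
    intro r
    rw [hst, ht r, mul_assoc, htt, mul_zero]
  have ht0 : z * C.sg z = 0 := by
    rcases C.sp _ _ k1 k2 with h | h
    · exact h
    · exact h
  have m1 : ∀ r : R, z * r * z = 0 := by
    intro r
    rw [hz r, mul_assoc, h2, mul_zero]
  have m2 : ∀ r : R, z * r * C.sg z = 0 := by
    intro r
    rw [hz r, mul_assoc, ht0, mul_zero]
  rcases C.sp _ _ m1 m2 with h | h
  · exact h
  · exact h

lemma Ctx.gc (C : Ctx R) (A : R → Prop) (hAadd : ∀ e f : R, A e → A f → A (e + f))
    (hAσ : ∀ e : R, A e → A (C.sg e))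
    (hfam : ∀ b : R, A b → ∀ c : R, A c → ∀ u ∈ C.U, ∀ s : R, (u * (b * s) - b * s * u) * c = 0) :
    ∀ e : R, A e → e = 0 := by
  obtain ⟨w₁, hw₁, w₂, hw₂, hw⟩ := C.exists_noncomm
  have hγ : ∀ b : R, A b → ∀ c : R, A c → ∀ u ∈ C.U, ∀ s : R, c * (s * b * u - u * (s * b)) = 0 := by
    intro b hb c hc u hu s
    have h0 := hfam _ (hAσ b hb) _ (hAσ c hc) _ (C.sgU u hu) (C.sg s)
    have h1 := congrArg C.sg h0
    simp only [C.sg_zero, C.sg_sub, C.sgmul, C.sginv] at h1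
    linear_combination (norm := noncomm_ring) h1
  have hD : ∀ b : R, A b → ∀ c : R, A c → ∀ u ∈ C.U, ∀ s : R, u * b * s * c = b * s * u * c := by
    intro b hb c hc u hu s
    linear_combination (norm := noncomm_ring) hfam b hb c hc u hu s
  have hG : ∀ b : R, A b → ∀ c : R, A c → ∀ u ∈ C.U, ∀ s : R, c * s * b * u = c * u * s * b := by
    intro b hb c hc u hu s
    linear_combination (norm := noncomm_ring) hγ b hb c hc u hu s
  have hb2 : ∀ f : R, A f → ∀ v ∈ C.U, f * v * f = f * f * v := by
    intro f hf v hv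
    linear_combination (norm := noncomm_ring) - hG f hf f hf v hv 1
  have hcomm4 : ∀ e : R, A e → ∀ f : R, A f → ∀ u ∈ C.U, ∀ r : R,
      u * (e * e * r * (f * f)) = (e * e * r * (f * f)) * u := by
    intro e he f hf u hu r
    have h1 := hD e he f hf u hu (e * r * f)
    have h2 := hb2 f hf u hu
    linear_combination (norm := noncomm_ring) h1 + (e * e * r) * h2
  have hZc : ∀ e : R, A e → ∀ f : R, A f → ∀ r s : R,
      (e * e * r * (f * f)) * s = s * (e * e * r * (f * f)) := by
    intro e he f hf r
    exact C.cz _ (fun u hu => (hcomm4 e he f hf u hu r).symm)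
  have hstar : ∀ e : R, A e → ∀ u ∈ C.U, ∀ s : R,
      e * e * (u * s - s * u) = (e * s * e) * u - u * (e * s * e) := by
    intro e he u hu s
    have h1 := hD e he e he u hu s
    have h2 := hG e he e he u hu s
    have h3 := hb2 e he _ (C.lie u hu s)
    linear_combination (norm := noncomm_ring) h1 - h2 - h3
  have hf4 : ∀ e : R, A e → ∀ u ∈ C.U, ∀ r : R, e * e * (e * e) * (u * r - r * u) = 0 := by
    intro e he u hu r
    have h1 := hstar e he u hu r
    have h2 := hstar e he u hu (e * r * e)
    have h3 := hZc e he e he r u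
    linear_combination (norm := noncomm_ring) (e * e) * h1 - h2 - h3
  have he4c : ∀ e : R, A e → ∀ s : R, (e * e * (e * e)) * s = s * (e * e * (e * e)) := by
    intro e he s
    have h1 := hZc e he e he 1 s
    linear_combination (norm := noncomm_ring) h1
  have he4 : ∀ e : R, A e → e * e * (e * e) = 0 := by
    intro e he
    have k1 : ∀ r : R, (e * e * (e * e)) * r * (w₁ * w₂ - w₂ * w₁) = 0 := by
      intro r
      rw [he4c e he r, mul_assoc r, hf4 e he w₁ hw₁ w₂, mul_zero]
    have k2 : ∀ r : R, (e * e * (e * e)) * r * C.sg (w₁ * w₂ - w₂ * w₁) = 0 := by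
      intro r
      rw [C.sg_comm, he4c e he r, mul_assoc r, hf4 e he (C.sg w₂) (C.sgU _ hw₂) (C.sg w₁), mul_zero]
    rcases C.sp _ _ k1 k2 with h | h
    · exact h
    · exact absurd (sub_eq_zero.mp h) hw
  have hef0 : ∀ e : R, A e → ∀ f : R, A f → ∀ r : R, e * e * r * (f * f) = 0 := by
    intro e he f hf r
    refine C.centnil _ (hZc e he f hf r) ?_
    calc (e * e * r * (f * f)) * (e * e * r * (f * f))
        = ((e * e * r * (f * f)) * (e * e)) * (r * (f * f)) := by noncomm_ring
      _ = ((e * e) * (e * e * r * (f * f))) * (r * (f * f)) := by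
            rw [hZc e he f hf r (e * e)]
      _ = (e * e * (e * e)) * (r * ((f * f) * (r * (f * f)))) := by noncomm_ring
      _ = 0 := by rw [he4 e he, zero_mul]
  have he2 : ∀ e : R, A e → e * e = 0 := by
    intro e he
    have k1 : ∀ r : R, (e * e) * r * (e * e) = 0 := fun r => hef0 e he e he r
    have k2 : ∀ r : R, (e * e) * r * C.sg (e * e) = 0 := by
      intro r
      rw [C.sgmul]
      exact hef0 e he _ (hAσ e he) r
    rcases C.sp _ _ k1 k2 with h | h
    · exact h
    · exact h
  have here0 : ∀ e : R, A e → ∀ r : R, e * r * e = 0 := by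
    intro e he r
    have hc : ∀ s : R, (e * r * e) * s = s * (e * r * e) := by
      apply C.cz
      intro u hu
      have h1 := hstar e he u hu r
      rw [he2 e he, zero_mul] at h1
      linear_combination (norm := noncomm_ring) - h1
    refine C.centnil _ hc ?_
    calc (e * r * e) * (e * r * e) = e * r * ((e * e) * (r * e)) := by noncomm_ring
      _ = 0 := by rw [he2 e he, zero_mul, mul_zero]
  have hskew : ∀ e : R, A e → ∀ f : R, A f → ∀ r : R, e * r * f = -(f * r * e) := by
    intro e he f hf r
    have h1 := here0 _ (hAadd e f he hf) r
    have h2 := here0 e he r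
    have h3 := here0 f hf r
    linear_combination (norm := noncomm_ring) h1 - h2 - h3
  have herse : ∀ e : R, A e → ∀ r : R, e * r * C.sg e = 0 := by
    intro e he r
    have hse := hAσ e he
    have k1 : ∀ s : R, (e * r * C.sg e) * s * (e * r * C.sg e) = 0 := by
      intro s
      linear_combination (norm := noncomm_ring)
        (e * r) * (hskew (C.sg e) hse e he s) * (r * C.sg e)
        - (here0 e he r) * (s * (C.sg e * (r * C.sg e)))
    have hsX : C.sg (e * r * C.sg e) = e * (C.sg r * C.sg e) := by
      rw [C.sgmul, C.sgmul, C.sginv]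
    have k2 : ∀ s : R, (e * r * C.sg e) * s * C.sg (e * r * C.sg e) = 0 := by
      intro s
      rw [hsX]
      linear_combination (norm := noncomm_ring)
        (e * r) * (hskew (C.sg e) hse e he s) * (C.sg r * C.sg e)
        - (here0 e he r) * (s * (C.sg e * (C.sg r * C.sg e)))
    rcases C.sp _ _ k1 k2 with h | h
    · exact h
    · exact h
  intro e he
  rcases C.sp e e (fun r => here0 e he r) (fun r => herse e he r) with h | h
  · exact h
  · exact h

lemma Ctx.lem3 (C : Ctx R) (d : R → R) (hdadd : ∀ x y : R, d (x + y) = d x + d y)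
    (hdmul : ∀ x y : R, d (x * y) = d x * y + x * d y)
    (h0 : ∀ u ∈ C.U, d u = 0) : ∀ x : R, d x = 0 := by
  have hd0 : d 0 = 0 := by
    have hh := hdadd 0 0
    rw [add_zero] at hh
    exact (left_eq_add.mp hh)
  have hdneg : ∀ x : R, d (-x) = -d x := by
    intro x
    have hh := hdadd x (-x)
    rw [add_neg_cancel, hd0] at hh
    exact eq_neg_of_add_eq_zero_right hh.symm
  have hdsub : ∀ x y : R, d (x - y) = d x - d y := by
    intro x y
    rw [sub_eq_add_neg, hdadd, hdneg, ← sub_eq_add_neg]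
  have hcent : ∀ r s : R, d r * s = s * d r := by
    intro r
    apply C.cz
    intro u hu
    have h1 : d (u * r - r * u) = 0 := h0 _ (C.lie u hu r)
    rw [hdsub, hdmul, hdmul, h0 u hu] at h1
    linear_combination (norm := noncomm_ring) - h1
  obtain ⟨w₁, hw₁, w₂, hw₂, hw⟩ := C.exists_noncomm
  have key : ∀ u ∈ C.U, ∀ u' ∈ C.U, ∀ s : R, (u * u' - u' * u) * d s = 0 := by
    intro u hu u' hu' s
    have h2 : d (u' * s) = u' * d s := by rw [hdmul, h0 u' hu', zero_mul, zero_add]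
    have h3 := hcent (u' * s) u
    rw [h2] at h3
    have h4 := hcent s u
    linear_combination (norm := noncomm_ring) u' * h4 - h3
  intro s
  have k1 : ∀ t : R, (w₁ * w₂ - w₂ * w₁) * t * d s = 0 := by
    intro t
    have h4 := hcent s t
    rw [mul_assoc, ← h4, ← mul_assoc, key w₁ hw₁ w₂ hw₂ s, zero_mul]
  have k2 : ∀ t : R, C.sg (w₁ * w₂ - w₂ * w₁) * t * d s = 0 := by
    intro t
    rw [C.sg_comm]
    have h4 := hcent s t
    rw [mul_assoc, ← h4, ← mul_assoc, key (C.sg w₂) (C.sgU _ hw₂) (C.sg w₁) (C.sgU _ hw₁) s, zero_mul]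
  rcases C.s1 _ _ k1 k2 with h | h
  · exact absurd (sub_eq_zero.mp h) hw
  · exact h

set_option maxHeartbeats 4000000 in
lemma Ctx.main (C : Ctx R) (d : R → R) (hdadd : ∀ x y : R, d (x + y) = d x + d y)
    (hdmul : ∀ x y : R, d (x * y) = d x * y + x * d y)
    (hdσ : ∀ u ∈ C.U, d (C.sg u) = C.sg (d u))
    (h : ∀ x ∈ C.U, ∀ y ∈ C.U, d x * d y - d y * d x = d (y * x - x * y)) :
    ∀ x : R, d x = 0 := by
  have hd0 : d 0 = 0 := by
    have hh := hdadd 0 0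
    rw [add_zero] at hh
    exact (left_eq_add.mp hh)
  have hdneg : ∀ x : R, d (-x) = -d x := by
    intro x
    have hh := hdadd x (-x)
    rw [add_neg_cancel, hd0] at hh
    exact eq_neg_of_add_eq_zero_right hh.symm
  have hQ1 : ∀ x ∈ C.U, ∀ u ∈ C.U, ∀ v ∈ C.U,
      d u * ((x + d x) * v - v * (x + d x)) + ((x + d x) * u - u * (x + d x)) * d v = 0 := by
    intro x hx u hu v hv
    have H := h x hx _ (C.twomul u v hu hv)
    rw [hdadd, hdmul] at H
    have hel : (u * v + u * v) * x - x * (u * v + u * v)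
        = (u * (v * x - x * v) + (u * x - x * u) * v) + (u * (v * x - x * v) + (u * x - x * u) * v) := by
      noncomm_ring
    rw [hel, hdadd, hdadd, hdmul, hdmul, ← h x hx v hv, ← h x hx u hu] at H
    refine C.tor _ ?_
    linear_combination (norm := noncomm_ring) H
  have hQstep : ∀ z₀ ∈ C.U, ∀ z : R,
      (∀ x ∈ C.U, ∀ u ∈ C.U, ∀ v ∈ C.U,
        d u * z * ((x + d x) * v - v * (x + d x)) + ((x + d x) * u - u * (x + d x)) * z * d v = 0) →
      ∀ x ∈ C.U, ∀ u ∈ C.U, ∀ v ∈ C.U,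
        d u * (z₀ * z) * ((x + d x) * v - v * (x + d x)) + ((x + d x) * u - u * (x + d x)) * (z₀ * z) * d v = 0 := by
    intro z₀ hz₀ z hQ x hx u hu v hv
    have H := hQ x hx _ (C.twomul u z₀ hu hz₀) v hv
    rw [hdadd, hdmul] at H
    have H0 := hQ x hx z₀ hz₀ v hv
    refine C.tor _ ?_
    linear_combination (norm := noncomm_ring) H - u * H0 - u * H0
  have hQU : ∀ z ∈ C.U, ∀ x ∈ C.U, ∀ u ∈ C.U, ∀ v ∈ C.U,
      d u * z * ((x + d x) * v - v * (x + d x)) + ((x + d x) * u - u * (x + d x)) * z * d v = 0 := by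
    intro z hz x hx u hu v hv
    have base : ∀ x ∈ C.U, ∀ u ∈ C.U, ∀ v ∈ C.U,
        d u * (1 : R) * ((x + d x) * v - v * (x + d x)) + ((x + d x) * u - u * (x + d x)) * (1 : R) * d v = 0 := by
      intro x hx u hu v hv
      linear_combination (norm := noncomm_ring) hQ1 x hx u hu v hv
    have H := hQstep z hz 1 base x hx u hu v hv
    linear_combination (norm := noncomm_ring) H
  have R12 : ∀ x ∈ C.U, ∀ z ∈ C.U, ∀ m ∈ C.U, ∀ u ∈ C.U, ∀ v ∈ C.U, ∀ t ∈ C.U,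
      ((x + d x) * u - u * (x + d x)) * z * ((x + d x) * v - v * (x + d x)) * m * d t = 0 := by
    intro x hx z hz m hm u hu v hv t ht
    have hBv : (x + d x) * v - v * (x + d x) ∈ C.U := by
      have h2 := neg_mem (C.lie v hv (x + d x))
      rwa [neg_sub] at h2
    have g1 := hQU z hz x hx u hu v hv
    have g2 := hQU m hm x hx v hv t ht
    have qmid := hQstep z hz (((x + d x) * v - v * (x + d x)) * m)
      (hQstep _ hBv m (hQU m hm)) x hx u hu t ht
    refine C.tor _ ?_
    linear_combination (norm := noncomm_ring)
      (((x + d x) * u - u * (x + d x)) * z) * g2 + qmid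
      - g1 * (m * ((x + d x) * t - t * (x + d x)))
  have XRC : ∀ x ∈ C.U, ∀ z ∈ C.U, ∀ u ∈ C.U, ∀ v ∈ C.U, ∀ p ∈ C.U, ∀ t ∈ C.U, ∀ t' ∈ C.U, ∀ s r : R,
      ((x + d x) * u - u * (x + d x)) * z * ((x + d x) * v - v * (x + d x)) * r *
        ((p * (d t * s) - d t * s * p) * d t') = 0 := by
    intro x hx z hz u hu v hv p hp t ht t' ht' s r
    have I1 := R12 x hx z hz _ (C.lie p hp (r * (d t * s))) u hu v hv t' ht'
    have I2 := R12 x hx z hz _ (C.lie p hp r) u hu v hv t ht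
    linear_combination (norm := noncomm_ring) I1 - I2 * (s * d t')
  by_cases hC : ∀ p ∈ C.U, ∀ t ∈ C.U, ∀ t' ∈ C.U, ∀ s : R, (p * (d t * s) - d t * s * p) * d t' = 0
  · have hAadd : ∀ e f : R, (∃ t ∈ C.U, d t = e) → (∃ t ∈ C.U, d t = f) → (∃ t ∈ C.U, d t = e + f) := by
      rintro e f ⟨t1, ht1, rfl⟩ ⟨t2, ht2, rfl⟩
      exact ⟨t1 + t2, add_mem ht1 ht2, hdadd t1 t2⟩
    have hAσ : ∀ e : R, (∃ t ∈ C.U, d t = e) → (∃ t ∈ C.U, d t = C.sg e) := by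
      rintro e ⟨t1, ht1, rfl⟩
      exact ⟨C.sg t1, C.sgU t1 ht1, hdσ t1 ht1⟩
    have hfam : ∀ b : R, (∃ t ∈ C.U, d t = b) → ∀ c : R, (∃ t ∈ C.U, d t = c) → ∀ u ∈ C.U, ∀ s : R,
        (u * (b * s) - b * s * u) * c = 0 := by
      rintro b ⟨t1, ht1, rfl⟩ c ⟨t2, ht2, rfl⟩ u hu s
      exact hC u hu t1 ht1 t2 ht2 s
    refine C.lem3 d hdadd hdmul ?_
    intro u hu
    exact C.gc _ hAadd hAσ hfam (d u) ⟨u, hu, rfl⟩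
  · exfalso
    push_neg at hC
    obtain ⟨p₀, hp₀, t₀, ht₀, t₀', ht₀', s₀, hC₀⟩ := hC
    have hWhom : ∀ x ∈ C.U, (C.sg (x + d x) = x + d x ∨ C.sg (x + d x) = -(x + d x)) →
        ∀ u ∈ C.U, (x + d x) * u = u * (x + d x) := by
      intro x hx hhom
      have hBI : ∀ u ∈ C.U, ∀ z ∈ C.U, ∀ v ∈ C.U,
          ((x + d x) * u - u * (x + d x)) * z * ((x + d x) * v - v * (x + d x)) = 0 := by
        intro u hu z hz v hv
        have k1 : ∀ r : R, ((x + d x) * u - u * (x + d x)) * z * ((x + d x) * v - v * (x + d x)) * r *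
            ((p₀ * (d t₀ * s₀) - d t₀ * s₀ * p₀) * d t₀') = 0 :=
          fun r => XRC x hx z hz u hu v hv p₀ hp₀ t₀ ht₀ t₀' ht₀' s₀ r
        have k2 : ∀ r : R, C.sg (((x + d x) * u - u * (x + d x)) * z * ((x + d x) * v - v * (x + d x))) * r *
            ((p₀ * (d t₀ * s₀) - d t₀ * s₀ * p₀) * d t₀') = 0 := by
          intro r
          have hσX : C.sg (((x + d x) * u - u * (x + d x)) * z * ((x + d x) * v - v * (x + d x)))
              = ((x + d x) * C.sg v - C.sg v * (x + d x)) * C.sg z * ((x + d x) * C.sg u - C.sg u * (x + d x)) := by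
            rcases hhom with h1 | h1
            · rw [C.sgmul, C.sgmul, C.sg_comm, C.sg_comm, h1]
              noncomm_ring
            · rw [C.sgmul, C.sgmul, C.sg_comm, C.sg_comm, h1]
              noncomm_ring
          rw [hσX]
          exact XRC x hx _ (C.sgU z hz) _ (C.sgU v hv) _ (C.sgU u hu) p₀ hp₀ t₀ ht₀ t₀' ht₀' s₀ r
        rcases C.s1 _ _ k1 k2 with hres | hres
        · exact hres
        · exact absurd hres hC₀
      have hBRC2 : ∀ u ∈ C.U, ∀ p ∈ C.U, ∀ v ∈ C.U, ∀ v' ∈ C.U, ∀ s r : R,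
          ((x + d x) * u - u * (x + d x)) * r *
            ((p * (((x + d x) * v - v * (x + d x)) * s) - ((x + d x) * v - v * (x + d x)) * s * p) *
              ((x + d x) * v' - v' * (x + d x))) = 0 := by
        intro u hu p hp v hv v' hv' s r
        have I1 := hBI u hu _ (C.lie p hp (r * (((x + d x) * v - v * (x + d x)) * s))) v' hv'
        have I2 := hBI u hu _ (C.lie p hp r) v hv
        linear_combination (norm := noncomm_ring) I1 - I2 * (s * ((x + d x) * v' - v' * (x + d x)))
      have hB0 : ∀ u ∈ C.U, (x + d x) * u - u * (x + d x) = 0 := by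
        by_cases hC2 : ∀ p ∈ C.U, ∀ v ∈ C.U, ∀ v' ∈ C.U, ∀ s : R,
            (p * (((x + d x) * v - v * (x + d x)) * s) - ((x + d x) * v - v * (x + d x)) * s * p) *
              ((x + d x) * v' - v' * (x + d x)) = 0
        · have hAadd : ∀ e f : R, (∃ v ∈ C.U, (x + d x) * v - v * (x + d x) = e) →
              (∃ v ∈ C.U, (x + d x) * v - v * (x + d x) = f) →
              (∃ v ∈ C.U, (x + d x) * v - v * (x + d x) = e + f) := by
            rintro e f ⟨v1, hv1, rfl⟩ ⟨v2, hv2, rfl⟩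
            exact ⟨v1 + v2, add_mem hv1 hv2, by noncomm_ring⟩
          have hAσ : ∀ e : R, (∃ v ∈ C.U, (x + d x) * v - v * (x + d x) = e) →
              (∃ v ∈ C.U, (x + d x) * v - v * (x + d x) = C.sg e) := by
            rintro e ⟨v1, hv1, rfl⟩
            rcases hhom with h1 | h1
            · refine ⟨-C.sg v1, neg_mem (C.sgU v1 hv1), ?_⟩
              rw [C.sg_comm, h1]
              noncomm_ring
            · refine ⟨C.sg v1, C.sgU v1 hv1, ?_⟩
              rw [C.sg_comm, h1]
              noncomm_ring
          have hfam2 : ∀ b : R, (∃ v ∈ C.U, (x + d x) * v - v * (x + d x) = b) →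
              ∀ c : R, (∃ v ∈ C.U, (x + d x) * v - v * (x + d x) = c) → ∀ u ∈ C.U, ∀ s : R,
              (u * (b * s) - b * s * u) * c = 0 := by
            rintro b ⟨v1, hv1, rfl⟩ c ⟨v2, hv2, rfl⟩ u hu s
            exact hC2 u hu v1 hv1 v2 hv2 s
          intro u hu
          exact C.gc _ hAadd hAσ hfam2 _ ⟨u, hu, rfl⟩
        · push_neg at hC2
          obtain ⟨p₁, hp₁, v₁, hv₁, v₁', hv₁', s₁, hC₂⟩ := hC2
          intro u hu
          have k1 := fun r => hBRC2 u hu p₁ hp₁ v₁ hv₁ v₁' hv₁' s₁ r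
          have k2 : ∀ r : R, C.sg ((x + d x) * u - u * (x + d x)) * r *
              ((p₁ * (((x + d x) * v₁ - v₁ * (x + d x)) * s₁) - ((x + d x) * v₁ - v₁ * (x + d x)) * s₁ * p₁) *
                ((x + d x) * v₁' - v₁' * (x + d x))) = 0 := by
            intro r
            rcases hhom with h1 | h1
            · rw [C.sg_comm, h1]
              linear_combination (norm := noncomm_ring)
                - hBRC2 (C.sg u) (C.sgU u hu) p₁ hp₁ v₁ hv₁ v₁' hv₁' s₁ r
            · rw [C.sg_comm, h1]
              linear_combination (norm := noncomm_ring)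
                hBRC2 (C.sg u) (C.sgU u hu) p₁ hp₁ v₁ hv₁ v₁' hv₁' s₁ r
          rcases C.s1 _ _ k1 k2 with hres | hres
          · exact hres
          · exact absurd hres hC₂
      intro u hu
      exact sub_eq_zero.mp (hB0 u hu)
    have hWall : ∀ x ∈ C.U, ∀ u ∈ C.U, (x + d x) * u = u * (x + d x) := by
      intro x hx u hu
      have hx1 : x + C.sg x ∈ C.U := add_mem hx (C.sgU x hx)
      have hx2 : x - C.sg x ∈ C.U := sub_mem hx (C.sgU x hx)
      have e1 : C.sg (x + C.sg x) = x + C.sg x := by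
        rw [C.sgadd, C.sginv, add_comm]
      have h1 : C.sg ((x + C.sg x) + d (x + C.sg x)) = (x + C.sg x) + d (x + C.sg x) := by
        rw [C.sgadd, e1, ← hdσ _ hx1, e1]
      have e2 : C.sg (x - C.sg x) = -(x - C.sg x) := by
        rw [C.sg_sub, C.sginv]
        abel
      have h2 : C.sg ((x - C.sg x) + d (x - C.sg x)) = -((x - C.sg x) + d (x - C.sg x)) := by
        rw [C.sgadd, e2, ← hdσ _ hx2, e2, hdneg]
        abel
      have hc1 := hWhom _ hx1 (Or.inl h1) u hu
      have hc2 := hWhom _ hx2 (Or.inr h2) u hu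
      have hdsum : d (x + C.sg x) + d (x - C.sg x) = d x + d x := by
        rw [← hdadd]
        have e3 : (x + C.sg x) + (x - C.sg x) = x + x := by abel
        rw [e3, hdadd]
      refine C.half ?_
      calc (x + d x) * u + (x + d x) * u
          = ((x + C.sg x) + d (x + C.sg x)) * u + ((x - C.sg x) + d (x - C.sg x)) * u := by
            linear_combination (norm := noncomm_ring) - hdsum * u
        _ = u * ((x + C.sg x) + d (x + C.sg x)) + u * ((x - C.sg x) + d (x - C.sg x)) := by
            rw [hc1, hc2]
        _ = u * (x + d x) + u * (x + d x) := by
            linear_combination (norm := noncomm_ring) u * hdsum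
    have hZ : ∀ x ∈ C.U, ∀ s : R, (x + d x) * s = s * (x + d x) := by
      intro x hx
      exact C.cz _ (fun u hu => hWall x hx u hu)
    have hcc : ∀ x ∈ C.U, ∀ y ∈ C.U, ∀ s : R,
        (x * y + d x * y + x * d y) * s = s * (x * y + d x * y + x * d y) := by
      intro x hx y hy s
      have h1 := hZ _ (C.twomul x y hx hy) s
      rw [hdadd, hdmul] at h1
      refine C.half ?_
      linear_combination (norm := noncomm_ring) h1
    have hdbr : ∀ x ∈ C.U, ∀ y ∈ C.U, d (y * x - x * y) = -(y * x - x * y) := by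
      intro x hx y hy
      linear_combination (norm := noncomm_ring)
        - h x hx y hy + hZ x hx (y + d y) - hZ x hx y + hZ y hy x
    have hv1 : ∀ x ∈ C.U, ∀ y ∈ C.U, d x * (y * x - x * y) = 0 := by
      intro x hx y hy
      linear_combination (norm := noncomm_ring)
        - x * hZ y hy x - hZ x hx x * y + hcc x hx y hy x
    have hUU : ∀ x ∈ C.U, ∀ y ∈ C.U, y * x = x * y := by
      intro x hx y hy
      have hvU : y * x - x * y ∈ C.U := C.lie y hy x
      have hdv : d (y * x - x * y) = -(y * x - x * y) := hdbr x hx y hy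
      have hpvc : ∀ p ∈ C.U, ∀ s : R,
          (p * (y * x - x * y) - (y * x - x * y) * p) * s = s * (p * (y * x - x * y) - (y * x - x * y) * p) := by
        intro p hp s
        have hc1 := hcc _ hvU p hp s
        rw [hdv] at hc1
        have hc2 := hcc p hp _ hvU s
        rw [hdv] at hc2
        have hz1 := hZ p hp (y * x - x * y)
        linear_combination (norm := noncomm_ring) hc1 - hc2 + hz1 * s - s * hz1
      have hpv0 : ∀ p ∈ C.U, p * (y * x - x * y) = (y * x - x * y) * p := by
        intro p hp
        have hvt : (y * x - x * y) * (p * (y * x - x * y) - (y * x - x * y) * p) = 0 := by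
          have hb := hv1 _ hvU p hp
          rw [hdv] at hb
          linear_combination (norm := noncomm_ring) - hb
        have ht2 : (p * (y * x - x * y) - (y * x - x * y) * p) *
            (p * (y * x - x * y) - (y * x - x * y) * p) = 0 := by
          have hcp := hpvc p hp p
          linear_combination (norm := noncomm_ring)
            p * hvt - hvt * p + (y * x - x * y) * hcp
        have hres := C.centnil _ (hpvc p hp) ht2
        linear_combination (norm := noncomm_ring) hres
      have hvc : ∀ s : R, (y * x - x * y) * s = s * (y * x - x * y) :=
        C.cz _ (fun p hp => (hpv0 p hp).symm)
      have hvdx : (y * x - x * y) * d x = 0 := by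
        have hb := hdbr _ (C.sqU x hx) y hy
        have hel : y * (x * x) - x * x * y = (y * x - x * y) * x + x * (y * x - x * y) := by
          noncomm_ring
        rw [hel, hdadd, hdmul, hdmul, hdv] at hb
        refine C.tor _ ?_
        linear_combination (norm := noncomm_ring) hb + hvc (d x)
      have hvdy : (y * x - x * y) * d y = 0 := by
        have hb := hdbr x hx _ (C.sqU y hy)
        have hel : y * y * x - x * (y * y) = y * (y * x - x * y) + (y * x - x * y) * y := by
          noncomm_ring
        rw [hel, hdadd, hdmul, hdmul, hdv] at hb
        refine C.tor _ ?_
        linear_combination (norm := noncomm_ring) hb + hvc (d y)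
      have hvv : (y * x - x * y) * (y * x - x * y) = 0 := by
        have step1 : (y * x - x * y) * (y * x - x * y)
            = (y * x - x * y) * ((y + d y) * (x + d x) - (x + d x) * (y + d y)) := by
          linear_combination (norm := noncomm_ring)
            - hvc (y + d y) * d x - (y + d y) * hvdx - hvdy * (x + d x) + hvdy * d x
            + hvc (x + d x) * d y + (x + d x) * hvdy + hvdx * (y + d y) - hvdx * d y
        have step2 : (y * x - x * y) * ((y + d y) * (x + d x) - (x + d x) * (y + d y)) = 0 := by
          linear_combination (norm := noncomm_ring)
            hvc (y + d y) * (x + d x) + (y + d y) * hvc (x + d x)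
            - hvc (x + d x) * (y + d y) - (x + d x) * hvc (y + d y)
            - hZ x hx (y + d y) * (y * x - x * y)
        rw [step1]
        exact step2
      have hv0 := C.centnil _ hvc hvv
      linear_combination (norm := noncomm_ring) hv0
    obtain ⟨u₀, hu₀, r₀, hner⟩ := C.hnc
    exact hner (C.lemD (fun a ha b hb => hUU b hb a ha) u₀ hu₀ r₀)

end Stmt10Aux

theorem stmt10 (R : Type*) [Ring R]
  (σ : R → R)
  (hσadd : ∀ x y : R, σ (x + y) = σ x + σ y)
  (hσmul : ∀ x y : R, σ (x * y) = σ y * σ x)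
  (hσinv : ∀ x : R, σ (σ x) = x)
  (htor : ∀ x : R, x + x = 0 → x = 0)
  (hsp : ∀ a b : R, (∀ r : R, a * r * b = 0) → (∀ r : R, a * r * σ b = 0) → a = 0 ∨ b = 0)
  (U : AddSubgroup R)
  (hLie : ∀ u ∈ U, ∀ r : R, u * r - r * u ∈ U)
  (hσU : ∀ u ∈ U, σ u ∈ U)
  (hsq : ∀ u ∈ U, u * u ∈ U)
  (d : R → R)
  (hdadd : ∀ x y : R, d (x + y) = d x + d y)
  (hdmul : ∀ x y : R, d (x * y) = d x * y + x * d y)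
  (hdσU : ∀ u ∈ U, d (σ u) = σ (d u))
  (h : ∀ x ∈ U, ∀ y ∈ U, d x * d y - d y * d x = d (y * x - x * y)) :
    (∀ x : R, d x = 0) ∨ (∀ u ∈ U, ∀ r : R, u * r = r * u) := by
  by_cases hcent : ∀ u ∈ U, ∀ r : R, u * r = r * u
  · exact Or.inr hcent
  · refine Or.inl ?_
    push_neg at hcent
    exact Stmt10Aux.Ctx.main
      { sg := σ, sgadd := hσadd, sgmul := hσmul, sginv := hσinv, tor := htor, sp := hsp,
        U := U, lie := hLie, sgU := hσU, sqU := hsq, hnc := hcent }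
      d hdadd hdmul hdσU h
end

section
/- Let R be a 2-torsion free σ-prime ring, U a nonzero square closed σ-Lie ideal of R, and d a derivation of R commuting with σ that acts as an anti-homomorphism on U (i.e., d(xy) = d(y)d(x) for all x, y ∈ U). Then d = 0 or U ⊆ Z(R). -/
/-!
Splitting elements as `2x = (x + σ x) + (x - σ x)` (2-torsion freeness) reduces most claims to
σ-symmetric or σ-skew elements, to which σ-primeness applies on either side. The key σ-prime
fact is that `c U b = 0` with `c, b` nonzero and σ-symmetric or skew forces `U` to be commutative,
and a commutative σ-Lie ideal is central.

The anti-homomorphism identity gives `d x * y * [d x, z] = 0` for `x, y, z ∈ U`, so if `U` is not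
central, `d(U)` commutes with `U`, and then (with `σ (d x) = d (σ x)`) lies in the center. Then
`d x * z + x * d z = d z * d x` yields `d x * d x = 0`, so `d(U) = 0`. Finally `d [u, r] = 0`
makes `d(R)` central and annihilated by `[U, U] ≠ 0`, so `d = 0`.
-/

section

variable {R : Type*} [Ring R]

theorem eq_of_add_self_eq_add_self {M : Type*} [AddCommGroup M]
    (htor : ∀ x : M, x + x = 0 → x = 0) {x y : M} (h : x + x = y + y) : x = y :=
  sub_eq_zero.mp <| htor _ <| by rw [sub_add_sub_comm, h, sub_self]

theorem Commute.of_add_of_sub (htor : ∀ x : R, x + x = 0 → x = 0) {a b c : R}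
    (h₁ : Commute (a + b) c) (h₂ : Commute (a - b) c) : Commute a c :=
  eq_of_add_self_eq_add_self htor <| by
    linear_combination (norm := noncomm_ring) h₁.eq + h₂.eq

structure IsInvolution (σ : R →+ R) : Prop where
  map_mul : ∀ x y : R, σ (x * y) = σ y * σ x
  map_map : ∀ x : R, σ (σ x) = x

def IsSigmaPrime (σ : R → R) : Prop :=
  ∀ a b : R, (∀ r : R, a * r * b = 0) → (∀ r : R, a * r * σ b = 0) → a = 0 ∨ b = 0

structure IsSigmaLieIdeal (σ : R → R) (U : AddSubgroup R) : Prop where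
  lie_mem : ∀ u ∈ U, ∀ r : R, u * r - r * u ∈ U
  map_mem : ∀ u ∈ U, σ u ∈ U

def IsSymmOrSkew (σ : R → R) (a : R) : Prop := σ a = a ∨ σ a = -a

section Involution

variable {σ : R →+ R}

theorem IsInvolution.isSymmOrSkew_add_map (hσ : IsInvolution σ) (x : R) :
    IsSymmOrSkew σ (x + σ x) :=
  Or.inl <| by rw [map_add, hσ.map_map, add_comm]

theorem IsInvolution.isSymmOrSkew_sub_map (hσ : IsInvolution σ) (x : R) :
    IsSymmOrSkew σ (x - σ x) :=
  Or.inr <| by rw [map_sub, hσ.map_map, neg_sub]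

theorem IsInvolution.map_commutator (hσ : IsInvolution σ) (a b : R) :
    σ (a * b - b * a) = σ b * σ a - σ a * σ b := by
  rw [map_sub, hσ.map_mul, hσ.map_mul]

theorem IsSymmOrSkew.commutator (hσ : IsInvolution σ) {a b : R} (ha : IsSymmOrSkew σ a)
    (hb : IsSymmOrSkew σ b) : IsSymmOrSkew σ (a * b - b * a) := by
  unfold IsSymmOrSkew
  rw [hσ.map_commutator]
  rcases ha with ha | ha <;> rcases hb with hb | hb <;> rw [ha, hb]
  · exact Or.inr (by noncomm_ring)
  · exact Or.inl (by noncomm_ring)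
  · exact Or.inl (by noncomm_ring)
  · exact Or.inr (by noncomm_ring)

theorem IsSymmOrSkew.map {d : R →+ R} (hdσ : ∀ x : R, d (σ x) = σ (d x)) {x : R}
    (hx : IsSymmOrSkew σ x) : IsSymmOrSkew σ (d x) := by
  rcases hx with hx | hx
  · exact Or.inl (by rw [← hdσ, hx])
  · exact Or.inr (by rw [← hdσ, hx, map_neg])

theorem IsSymmOrSkew.mul_mul_map_eq_zero {a b : R} (hb : IsSymmOrSkew σ b)
    (h : ∀ r : R, a * r * b = 0) (r : R) : a * r * σ b = 0 := by
  rcases hb with hb | hb <;> simp [hb, h]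

theorem IsSigmaPrime.eq_zero_of_isSymmOrSkew (hp : IsSigmaPrime σ) {a b : R}
    (hb : IsSymmOrSkew σ b) (hb0 : b ≠ 0) (h : ∀ r : R, a * r * b = 0) : a = 0 :=
  (hp a b h (hb.mul_mul_map_eq_zero h)).resolve_right hb0

theorem IsSigmaPrime.eq_zero_of_isSymmOrSkew_left (hσ : IsInvolution σ) (hp : IsSigmaPrime σ)
    {c b : R} (hc : IsSymmOrSkew σ c) (hc0 : c ≠ 0) (h : ∀ r : R, c * r * b = 0) : b = 0 := by
  have hσ' : ∀ r : R, σ b * r * σ c = 0 := fun r => by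
    simpa [hσ.map_mul, hσ.map_map, mul_assoc] using congrArg σ (h (σ r))
  have hσ'' : ∀ r : R, σ b * r * c = 0 := by
    rcases hc with hc | hc <;> simpa [hc] using hσ'
  rw [← hσ.map_map b, (hp _ _ hσ'' hσ').resolve_right hc0, map_zero]

end Involution

section LieIdeal

variable {σ : R →+ R} {U : AddSubgroup R}

theorem mul_add_mul_mem (hU : ∀ u ∈ U, ∀ r : R, u * r - r * u ∈ U)
    (hsq : ∀ u ∈ U, u * u ∈ U) {u v : R} (hu : u ∈ U) (hv : v ∈ U) :
    u * v + u * v ∈ U := by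
  have hsq' : (u + v) * (u + v) - u * u - v * v ∈ U :=
    U.sub_mem (U.sub_mem (hsq _ (U.add_mem hu hv)) (hsq u hu)) (hsq v hv)
  have e : u * v + u * v = ((u + v) * (u + v) - u * u - v * v) + (u * v - v * u) := by
    noncomm_ring
  exact e ▸ U.add_mem hsq' (hU u hu v)

theorem commutator_mul_mul_commutator_eq_zero_of_pairwise_commute
    (htor : ∀ x : R, x + x = 0 → x = 0) (hU : ∀ u ∈ U, ∀ r : R, u * r - r * u ∈ U)
    (hc : ∀ u ∈ U, ∀ v ∈ U, Commute u v) {w : R} (hw : w ∈ U) (r s t : R) :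
    (w * r - r * w) * s * (w * t - t * w) = 0 := by
  have hprod : ∀ r s : R, (w * r - r * w) * (w * s - s * w) = 0 := fun r s => by
    have h₁ := (hc w hw _ (hU w hw r)).eq
    have h₂ := (hc w hw _ (hU w hw s)).eq
    have h₃ := (hc w hw _ (hU w hw (r * s))).eq
    exact htor _ (by linear_combination (norm := noncomm_ring) h₃ - h₁ * s - r * h₂)
  linear_combination (norm := noncomm_ring) hprod r (s * t) - hprod r s * t

theorem commutator_mul_mul_commutator_eq_zero_of_forall_commute
    (hU : ∀ u ∈ U, ∀ r : R, u * r - r * u ∈ U) {b : R} (hb : ∀ u ∈ U, Commute u b)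
    {u v : R} (hu : u ∈ U) (hv : v ∈ U) (r t : R) :
    (u * v - v * u) * r * (t * b - b * t) = 0 := by
  have hprod : ∀ t : R, (u * v - v * u) * (t * b - b * t) = 0 := fun t => by
    have h₁ := (hb _ (hU u hu v)).eq
    have h₂ := (hb _ (hU u hu (v * t))).eq
    have h₃ := (hb _ (hU u hu t)).eq
    have h₄ := (hb v hv).eq
    linear_combination (norm := noncomm_ring) h₂ - h₁ * t - v * h₃ - h₄ * (u * t - t * u)
  linear_combination (norm := noncomm_ring) hprod (r * t) - hprod r * t

theorem IsSigmaPrime.commute_of_pairwise_commute (hσ : IsInvolution σ) (hp : IsSigmaPrime σ)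
    (htor : ∀ x : R, x + x = 0 → x = 0) (hU : IsSigmaLieIdeal σ U)
    (hc : ∀ u ∈ U, ∀ v ∈ U, Commute u v) {u : R} (hu : u ∈ U) (r : R) : Commute u r := by
  have hann {w : R} (hw : w ∈ U) :=
    commutator_mul_mul_commutator_eq_zero_of_pairwise_commute htor hU.lie_mem hc hw
  have hsymm : ∀ w ∈ U, IsSymmOrSkew σ w → ∀ t, Commute w t := by
    intro w hw hsw t
    have h₂ : ∀ s : R, (w * t - t * w) * s * σ (w * t - t * w) = 0 := fun s => by
      rw [hσ.map_commutator]
      rcases hsw with h | h <;> rw [h]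
      · linear_combination (norm := noncomm_ring) -hann hw t s (σ t)
      · linear_combination (norm := noncomm_ring) hann hw t s (σ t)
    rcases hp _ _ (hann hw t · t) h₂ with h | h <;> exact sub_eq_zero.mp h
  have hσu := hU.map_mem u hu
  exact Commute.of_add_of_sub htor
    (hsymm _ (U.add_mem hu hσu) (hσ.isSymmOrSkew_add_map u) r)
    (hsymm _ (U.sub_mem hu hσu) (hσ.isSymmOrSkew_sub_map u) r)

theorem IsSigmaPrime.commute_of_forall_commute (hσ : IsInvolution σ) (hp : IsSigmaPrime σ)
    (hU : ∀ u ∈ U, ∀ r : R, u * r - r * u ∈ U)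
    (hq : ∃ u ∈ U, ∃ v ∈ U, ¬Commute u v) {a : R} (ha : ∀ u ∈ U, Commute u a)
    (haσ : ∀ u ∈ U, Commute u (σ a)) (t : R) : Commute a t := by
  obtain ⟨u, hu, v, hv, huv⟩ := hq
  have h₂ : ∀ r : R, (u * v - v * u) * r * σ (t * a - a * t) = 0 := fun r => by
    rw [hσ.map_commutator]
    linear_combination (norm := noncomm_ring)
      -commutator_mul_mul_commutator_eq_zero_of_forall_commute hU haσ hu hv r (σ t)
  rcases hp _ _ (commutator_mul_mul_commutator_eq_zero_of_forall_commute hU ha hu hv · t) h₂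
    with h | h
  · exact absurd (sub_eq_zero.mp h) huv
  · exact (sub_eq_zero.mp h).symm

theorem IsSigmaPrime.mul_mul_mul_eq_of_forall_mul_mul_eq_zero (hσ : IsInvolution σ)
    (hp : IsSigmaPrime σ) (hU : ∀ u ∈ U, ∀ r : R, u * r - r * u ∈ U) {c B : R}
    (hc : IsSymmOrSkew σ c) (hc0 : c ≠ 0) (h : ∀ y ∈ U, c * y * B = 0) {u : R} (hu : u ∈ U)
    (s : R) : u * B * s * B = B * s * u * B := by
  refine sub_eq_zero.mp (hp.eq_zero_of_isSymmOrSkew_left hσ hc hc0 fun r => ?_)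
  linear_combination (norm := noncomm_ring)
    h _ (hU u hu (r * B * s)) - h _ (hU u hu r) * (s * B)

theorem IsSigmaPrime.commutator_mul_eq_zero_of_forall_mul_mul_mul_eq (hp : IsSigmaPrime σ)
    (htor : ∀ x : R, x + x = 0 → x = 0) (hU : ∀ u ∈ U, ∀ r : R, u * r - r * u ∈ U)
    (hsq : ∀ u ∈ U, u * u ∈ U) {B : R} (hB : IsSymmOrSkew σ B) (hB0 : B ≠ 0)
    (h : ∀ u ∈ U, ∀ s : R, u * B * s * B = B * s * u * B) {u v : R} (hu : u ∈ U)
    (hv : v ∈ U) : (u * v - v * u) * B = 0 := by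
  have hsandwich : ∀ s : R, B * s * (u * v - v * u) * B = 0 := fun s => by
    have huv : u * v * B * s * B = B * s * (u * v) * B :=
      eq_of_add_self_eq_add_self htor <| by
        linear_combination (norm := noncomm_ring) h _ (mul_add_mul_mem hU hsq hu hv) s
    linear_combination (norm := noncomm_ring) u * h v hv s + h u hu (s * v) - huv
  refine hp.eq_zero_of_isSymmOrSkew hB hB0 fun s => ?_
  rw [h _ (hU u hu v) s, hsandwich]

theorem IsSigmaPrime.commute_of_forall_commutator_mul_eq_zero (hp : IsSigmaPrime σ)
    (hU : ∀ u ∈ U, ∀ r : R, u * r - r * u ∈ U) {B : R} (hB : IsSymmOrSkew σ B)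
    (hB0 : B ≠ 0) (h : ∀ u ∈ U, ∀ v ∈ U, (u * v - v * u) * B = 0) {u v : R} (hu : u ∈ U)
    (hv : v ∈ U) : Commute u v := by
  have hlie : ∀ r : R, ((u * v - v * u) * r - r * (u * v - v * u)) * B = 0 := fun r => by
    linear_combination (norm := noncomm_ring)
      h u hu _ (hU v hv r) - h v hv _ (hU u hu r)
  have hcentral : ∀ r : R, Commute (u * v - v * u) r := fun r =>
    sub_eq_zero.mp <| hp.eq_zero_of_isSymmOrSkew hB hB0 fun s => by
      linear_combination (norm := noncomm_ring) hlie (r * s) - r * hlie s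
  refine sub_eq_zero.mp <| hp.eq_zero_of_isSymmOrSkew hB hB0 fun r => ?_
  linear_combination (norm := noncomm_ring) (hcentral r).eq * B + r * h u hu v hv

theorem IsSigmaPrime.pairwise_commute_of_forall_mul_mul_eq_zero (hσ : IsInvolution σ)
    (hp : IsSigmaPrime σ) (htor : ∀ x : R, x + x = 0 → x = 0)
    (hU : ∀ u ∈ U, ∀ r : R, u * r - r * u ∈ U) (hsq : ∀ u ∈ U, u * u ∈ U) {c B : R}
    (hc : IsSymmOrSkew σ c) (hc0 : c ≠ 0) (hB : IsSymmOrSkew σ B) (hB0 : B ≠ 0)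
    (h : ∀ y ∈ U, c * y * B = 0) : ∀ u ∈ U, ∀ v ∈ U, Commute u v :=
  fun _ hu _ hv => hp.commute_of_forall_commutator_mul_eq_zero hU hB hB0
    (fun _ hu _ hv => hp.commutator_mul_eq_zero_of_forall_mul_mul_mul_eq htor hU hsq hB hB0
      (fun _ hu s => hp.mul_mul_mul_eq_of_forall_mul_mul_eq_zero hσ hU hc hc0 h hu s) hu hv)
    hu hv

end LieIdeal

section Derivation

variable {σ : R →+ R} {U : AddSubgroup R} {d : R →+ R}

theorem derivation_mul_mul_eq_mul_mul_derivation (htor : ∀ x : R, x + x = 0 → x = 0)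
    (hU : ∀ u ∈ U, ∀ r : R, u * r - r * u ∈ U) (hsq : ∀ u ∈ U, u * u ∈ U)
    (hd : ∀ x y : R, d (x * y) = d x * y + x * d y)
    (hanti : ∀ x ∈ U, ∀ y ∈ U, d (x * y) = d y * d x) {x y : R} (hx : x ∈ U)
    (hy : y ∈ U) : d x * (x * y) = d x * y * d x := by
  have hxy : d x * y + x * d y = d y * d x := (hd x y).symm.trans (hanti x hx y hy)
  have hxxy : d x * (x * y) + x * (d y * d x) = d y * d x * d x := by
    apply eq_of_add_self_eq_add_self htor
    have e := hanti x hx _ (mul_add_mul_mem hU hsq hx hy)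
    rw [mul_add, map_add, map_add, hd x (x * y), hanti x hx y hy] at e
    linear_combination (norm := noncomm_ring) e
  linear_combination (norm := noncomm_ring) hxxy - hxy * d x

theorem derivation_mul_mul_commutator_eq_zero (htor : ∀ x : R, x + x = 0 → x = 0)
    (hU : ∀ u ∈ U, ∀ r : R, u * r - r * u ∈ U) (hsq : ∀ u ∈ U, u * u ∈ U)
    (hd : ∀ x y : R, d (x * y) = d x * y + x * d y)
    (hanti : ∀ x ∈ U, ∀ y ∈ U, d (x * y) = d y * d x) {x y z : R} (hx : x ∈ U)
    (hy : y ∈ U) (hz : z ∈ U) : d x * y * (d x * z - z * d x) = 0 := by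
  have key {y : R} (hy : y ∈ U) :=
    derivation_mul_mul_eq_mul_mul_derivation htor hU hsq hd hanti hx hy
  have hyz : d x * (x * (y * z)) = d x * (y * z) * d x :=
    eq_of_add_self_eq_add_self htor <| by
      linear_combination (norm := noncomm_ring) key (mul_add_mul_mem hU hsq hy hz)
  linear_combination (norm := noncomm_ring) hyz - key hy * z

theorem IsSigmaPrime.commute_derivation_of_not_central (hσ : IsInvolution σ)
    (hp : IsSigmaPrime σ) (htor : ∀ x : R, x + x = 0 → x = 0) (hU : IsSigmaLieIdeal σ U)
    (hsq : ∀ u ∈ U, u * u ∈ U) (hd : ∀ x y : R, d (x * y) = d x * y + x * d y)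
    (hdσ : ∀ x : R, d (σ x) = σ (d x))
    (hanti : ∀ x ∈ U, ∀ y ∈ U, d (x * y) = d y * d x)
    (hZ : ¬∀ u ∈ U, ∀ r : R, Commute u r) {x z : R} (hx : x ∈ U) (hz : z ∈ U) :
    Commute (d x) z := by
  have hsymm :
      ∀ x ∈ U, IsSymmOrSkew σ x → ∀ z ∈ U, IsSymmOrSkew σ z → Commute (d x) z := by
    intro x hx hsx z hz hsz
    by_contra hxz
    have hx0 : d x ≠ 0 := fun h => hxz (by rw [h]; exact Commute.zero_left z)
    refine hZ fun u hu => hp.commute_of_pairwise_commute hσ htor hU ?_ hu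
    exact hp.pairwise_commute_of_forall_mul_mul_eq_zero hσ htor hU.lie_mem hsq (hsx.map hdσ) hx0
      ((hsx.map hdσ).commutator hσ hsz) (sub_ne_zero.mpr hxz)
      fun y hy => derivation_mul_mul_commutator_eq_zero htor hU.lie_mem hsq hd hanti hx hy hz
  have hσz := hU.map_mem z hz
  have hz' : ∀ x ∈ U, IsSymmOrSkew σ x → Commute (d x) z := fun x hx hsx =>
    (Commute.of_add_of_sub htor
      (hsymm x hx hsx _ (U.add_mem hz hσz) (hσ.isSymmOrSkew_add_map z)).symm
      (hsymm x hx hsx _ (U.sub_mem hz hσz) (hσ.isSymmOrSkew_sub_map z)).symm).symm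
  have hσx := hU.map_mem x hx
  have h₁ := hz' _ (U.add_mem hx hσx) (hσ.isSymmOrSkew_add_map x)
  have h₂ := hz' _ (U.sub_mem hx hσx) (hσ.isSymmOrSkew_sub_map x)
  rw [map_add] at h₁
  rw [map_sub] at h₂
  exact Commute.of_add_of_sub htor h₁ h₂

theorem derivation_mul_derivation_mul_commutator_eq_zero (htor : ∀ x : R, x + x = 0 → x = 0)
    (hd : ∀ x y : R, d (x * y) = d x * y + x * d y)
    (hanti : ∀ x ∈ U, ∀ y ∈ U, d (x * y) = d y * d x)
    (hc : ∀ x ∈ U, ∀ t : R, Commute (d x) t)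
    {x w : R} (hx : x ∈ U) (hw : w ∈ U) (r : R) : d x * d x * (w * r - r * w) = 0 := by
  have hlin : ∀ z ∈ U, d x * (z * r - r * z) + d z * (x * r - r * x) = 0 := fun z hz => by
    have hxz : d x * z + x * d z = d z * d x := (hd x z).symm.trans (hanti x hx z hz)
    have cx := fun t => (hc x hx t).eq
    have cz := fun t => (hc z hz t).eq
    linear_combination (norm := noncomm_ring) hxz * r - r * hxz + cz x * r - cz (r * x)
      + d z * cx r + cz r * d x - cx r * z
  have hself : d x * (x * r - r * x) = 0 :=
    eq_of_add_self_eq_add_self htor (by linear_combination (norm := noncomm_ring) hlin x hx)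
  linear_combination (norm := noncomm_ring)
    d x * hlin w hw - (hc x hx (d w)).eq * (x * r - r * x) - d w * hself

theorem IsSigmaPrime.derivation_eq_zero_of_central (hσ : IsInvolution σ) (hp : IsSigmaPrime σ)
    (htor : ∀ x : R, x + x = 0 → x = 0) (hσU : ∀ u ∈ U, σ u ∈ U)
    (hd : ∀ x y : R, d (x * y) = d x * y + x * d y) (hdσ : ∀ x : R, d (σ x) = σ (d x))
    (hanti : ∀ x ∈ U, ∀ y ∈ U, d (x * y) = d y * d x)
    (hq : ∃ u ∈ U, ∃ v ∈ U, ¬Commute u v)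
    (hc : ∀ x ∈ U, ∀ t : R, Commute (d x) t) {x : R} (hx : x ∈ U) : d x = 0 := by
  have hnil : ∀ x ∈ U, d x * d x = 0 := by
    intro x hx
    obtain ⟨u, hu, v, hv, huv⟩ := hq
    have hann : ∀ u ∈ U, ∀ v ∈ U, ∀ r : R, d x * d x * r * (u * v - v * u) = 0 :=
      fun u hu v hv r => by
        rw [((hc x hx r).mul_left (hc x hx r)).eq, mul_assoc,
          derivation_mul_derivation_mul_commutator_eq_zero htor hd hanti hc hx hu, mul_zero]
    refine (hp _ _ (hann u hu v hv) fun r => ?_).resolve_right (sub_ne_zero.mpr huv)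
    rw [hσ.map_commutator]
    exact hann _ (hσU v hv) _ (hσU u hu) r
  have hσx := hσU x hx
  have hxσx : d x * d (σ x) = 0 := htor _ <| by
    have h := hnil _ (U.add_mem hx hσx)
    rw [map_add] at h
    linear_combination (norm := noncomm_ring)
      h - hnil x hx - hnil _ hσx + (hc x hx (d (σ x))).eq
  refine (hp _ _ (fun r => ?_) (fun r => ?_)).elim id id
  · rw [(hc x hx r).eq, mul_assoc, hnil x hx, mul_zero]
  · rw [← hdσ, (hc x hx r).eq, mul_assoc, hxσx, mul_zero]

theorem IsSigmaPrime.derivation_eq_zero_of_forall_mem (hσ : IsInvolution σ)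
    (hp : IsSigmaPrime σ) (hU : ∀ u ∈ U, ∀ r : R, u * r - r * u ∈ U)
    (hd : ∀ x y : R, d (x * y) = d x * y + x * d y) (hdσ : ∀ x : R, d (σ x) = σ (d x))
    (hq : ∃ u ∈ U, ∃ v ∈ U, ¬Commute u v) (h0 : ∀ x ∈ U, d x = 0) (r : R) :
    d r = 0 := by
  have hcomm : ∀ u ∈ U, ∀ r : R, Commute u (d r) := fun u hu r => by
    have h := h0 _ (hU u hu r)
    rw [map_sub, hd, hd, h0 u hu] at h
    exact sub_eq_zero.mp (by linear_combination (norm := noncomm_ring) h)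
  have hcentral : ∀ r t : R, Commute (d r) t := fun r =>
    hp.commute_of_forall_commute hσ hU hq (fun u hu => hcomm u hu r)
      (fun u hu => hdσ r ▸ hcomm u hu (σ r))
  obtain ⟨u, hu, v, hv, huv⟩ := hq
  have hann : ∀ r t : R, (u * v - v * u) * t * d r = 0 := fun r t => by
    have hdur : d (u * r) = u * d r := by rw [hd, h0 u hu, zero_mul, zero_add]
    have h := (hcentral (u * r) v).eq
    rw [hdur] at h
    linear_combination (norm := noncomm_ring)
      (h - u * (hcentral r v).eq) * t - (u * v - v * u) * (hcentral r t).eq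
  exact (hp _ _ (hann r) fun t => hdσ r ▸ hann (σ r) t).resolve_left (sub_ne_zero.mpr huv)

end Derivation

end

theorem stmt11_general (R : Type*) [Ring R]
  (σ : R → R)
  (hσadd : ∀ x y : R, σ (x + y) = σ x + σ y)
  (hσmul : ∀ x y : R, σ (x * y) = σ y * σ x)
  (hσinv : ∀ x : R, σ (σ x) = x)
  (htor : ∀ x : R, x + x = 0 → x = 0)
  (hsp : ∀ a b : R, (∀ r : R, a * r * b = 0) → (∀ r : R, a * r * σ b = 0) → a = 0 ∨ b = 0)
  (U : AddSubgroup R)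
  (hLie : ∀ u ∈ U, ∀ r : R, u * r - r * u ∈ U)
  (hσU : ∀ u ∈ U, σ u ∈ U)
  (hsq : ∀ u ∈ U, u * u ∈ U)
  (d : R → R)
  (hdadd : ∀ x y : R, d (x + y) = d x + d y)
  (hdmul : ∀ x y : R, d (x * y) = d x * y + x * d y)
  (hdσ : ∀ x : R, d (σ x) = σ (d x))
  (hanti : ∀ x ∈ U, ∀ y ∈ U, d (x * y) = d y * d x) :
    (∀ x : R, d x = 0) ∨ (∀ u ∈ U, ∀ r : R, u * r = r * u) := by
  let σ' : R →+ R := AddMonoidHom.mk' σ hσadd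
  let d' : R →+ R := AddMonoidHom.mk' d hdadd
  have hσ : IsInvolution σ' := ⟨hσmul, hσinv⟩
  have hdσ' : ∀ x, d' (σ' x) = σ' (d' x) := hdσ
  have hp : IsSigmaPrime σ' := hsp
  have hU : IsSigmaLieIdeal σ' U := ⟨hLie, hσU⟩
  by_cases hZ : ∀ u ∈ U, ∀ r : R, Commute u r
  · exact Or.inr hZ
  have hq : ∃ u ∈ U, ∃ v ∈ U, ¬Commute u v := by
    by_contra! hc
    exact hZ fun u hu => hp.commute_of_pairwise_commute hσ htor hU hc hu
  have hcomm : ∀ x ∈ U, ∀ z ∈ U, Commute (d' x) z := fun x hx z hz =>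
    hp.commute_derivation_of_not_central (d := d') hσ htor hU hsq hdmul hdσ hanti hZ hx hz
  have hcentral : ∀ x ∈ U, ∀ t : R, Commute (d' x) t := fun x hx =>
    hp.commute_of_forall_commute hσ hLie hq (fun z hz => (hcomm x hx z hz).symm)
      fun z hz => hdσ' x ▸ (hcomm _ (hσU x hx) z hz).symm
  have hU0 : ∀ x ∈ U, d' x = 0 := fun x hx =>
    hp.derivation_eq_zero_of_central hσ htor hσU hdmul hdσ hanti hq hcentral hx
  exact Or.inl (hp.derivation_eq_zero_of_forall_mem hσ hLie hdmul hdσ hq hU0)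

theorem stmt11 (R : Type*) [Ring R]
  (σ : R → R)
  (hσadd : ∀ x y : R, σ (x + y) = σ x + σ y)
  (hσmul : ∀ x y : R, σ (x * y) = σ y * σ x)
  (hσinv : ∀ x : R, σ (σ x) = x)
  (htor : ∀ x : R, x + x = 0 → x = 0)
  (hsp : ∀ a b : R, (∀ r : R, a * r * b = 0) → (∀ r : R, a * r * σ b = 0) → a = 0 ∨ b = 0)
  (U : AddSubgroup R)
  (hLie : ∀ u ∈ U, ∀ r : R, u * r - r * u ∈ U)
  (hσU : ∀ u ∈ U, σ u ∈ U)
  (hsq : ∀ u ∈ U, u * u ∈ U)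
  (hUnz : ∃ u ∈ U, u ≠ (0 : R))
  (d : R → R)
  (hdadd : ∀ x y : R, d (x + y) = d x + d y)
  (hdmul : ∀ x y : R, d (x * y) = d x * y + x * d y)
  (hdσ : ∀ x : R, d (σ x) = σ (d x))
  (hanti : ∀ x ∈ U, ∀ y ∈ U, d (x * y) = d y * d x) :
    (∀ x : R, d x = 0) ∨ (∀ u ∈ U, ∀ r : R, u * r = r * u) :=
  stmt11_general R σ hσadd hσmul hσinv htor hsp U hLie hσU hsq d hdadd hdmul hdσ hanti
end
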